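/- arXiv:2504.06104 — 7 statements merged into one kernel-verified Lean document; each statement's English description precedes it below -/
import Mathlib

section
/- Let Φ be a finite-valued Young's function. Then for every integer j ≥ 1 there is a constant C_j > 0, independent of a, such that for all a > 0 in the domain of finiteness, ∫₀^a (Φ(y)/y)(log(a/y))^{j-3/2} dy ≤ C_j · Φ(a). -/
open MeasureTheory

open Set Real in
/-- For a finite-valued Young's function `Φ` (convex, nondecreasing, `Φ(0)=0`,
nonnegative on `[0,∞)`) and every integer `j ≥ 1` there is a constant `C_j > 0`,
independent of `a`, such that for all `a > 0`:
`∫₀^a (Φ(y)/y) (log(a/y))^(j-3/2) dy ≤ C_j · Φ(a)`. -/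
theorem young_log_integral_bound_half (Φ : ℝ → ℝ)
    (hconv : ConvexOn ℝ (Set.Ici 0) Φ) (h0 : Φ 0 = 0)
    (hmono : MonotoneOn Φ (Set.Ici 0)) (hnonneg : ∀ x ≥ (0 : ℝ), 0 ≤ Φ x)
    (j : ℕ) (hj : 1 ≤ j) :
    ∃ C : ℝ, 0 < C ∧ ∀ a : ℝ, 0 < a →
      ∫⁻ y in Set.Ioo (0 : ℝ) a,
          ENNReal.ofReal ((Φ y / y) * Real.log (a / y) ^ ((j : ℝ) - 3 / 2)) ≤
        ENNReal.ofReal (C * Φ a) := by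
  set p : ℝ := (j : ℝ) - 3 / 2 with hpdef
  have hj1 : (1 : ℝ) ≤ (j : ℝ) := by exact_mod_cast hj
  have hp : (0 : ℝ) < p + 1 := by simp only [hpdef]; linarith
  -- integrability of u ↦ (-log u)^p on (0,1)
  have himg : (fun t : ℝ => Real.exp (-t)) '' Set.Ioi 0 = Set.Ioo (0 : ℝ) 1 := by
    ext u
    constructor
    · rintro ⟨t, ht, rfl⟩
      exact ⟨Real.exp_pos _, Real.exp_lt_one_iff.2 (by simpa using ht)⟩
    · rintro ⟨hu0, hu1⟩
      exact ⟨-Real.log u, by simpa using Real.log_neg hu0 hu1, by simp [Real.exp_log hu0]⟩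
  have hderiv : ∀ t ∈ Set.Ioi (0 : ℝ),
      HasDerivWithinAt (fun t : ℝ => Real.exp (-t)) (-Real.exp (-t)) (Set.Ioi 0) t := by
    intro t _
    have h := (Real.hasDerivAt_exp (-t)).comp t (hasDerivAt_neg t)
    simpa [Function.comp_def] using h.hasDerivWithinAt
  have hinj : Set.InjOn (fun t : ℝ => Real.exp (-t)) (Set.Ioi 0) := by
    intro x _ y _ h
    simpa using Real.exp_injective h
  have hgs : IntegrableOn (fun u : ℝ => (-Real.log u) ^ p) (Set.Ioo (0 : ℝ) 1) := by
    rw [← himg, integrableOn_image_iff_integrableOn_abs_deriv_smul measurableSet_Ioi hderiv hinj]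
    have hG := Real.GammaIntegral_convergent hp
    apply hG.congr_fun _ measurableSet_Ioi
    intro t ht
    simp only [Set.mem_Ioi] at ht
    simp [abs_of_pos (Real.exp_pos (-t)), Real.log_exp, smul_eq_mul]
  set K : ℝ := ∫ u in Set.Ioo (0 : ℝ) 1, (-Real.log u) ^ p with hK
  have hK0 : 0 ≤ K := by
    apply setIntegral_nonneg measurableSet_Ioo
    intro u hu
    exact Real.rpow_nonneg (by simpa using (Real.log_neg hu.1 hu.2).le) _
  refine ⟨K + 1, by linarith, fun a ha => ?_⟩
  have hΦa : 0 ≤ Φ a := hnonneg a ha.le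
  -- pointwise bound
  have hbound : ∀ y ∈ Set.Ioo (0 : ℝ) a,
      ENNReal.ofReal ((Φ y / y) * Real.log (a / y) ^ p) ≤
      ENNReal.ofReal ((Φ a / a) * Real.log (a / y) ^ p) := by
    intro y hy
    apply ENNReal.ofReal_le_ofReal
    have hlog : (0 : ℝ) ≤ Real.log (a / y) ^ p :=
      Real.rpow_nonneg (Real.log_nonneg ((one_le_div hy.1).2 hy.2.le)) _
    apply mul_le_mul_of_nonneg_right _ hlog
    have hΦy : Φ y ≤ (y / a) * Φ a := by
      have hya1 : y / a ≤ 1 := (div_le_one ha).2 hy.2.le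
      have := hconv.2 (Set.mem_Ici.2 ha.le) (Set.mem_Ici.2 le_rfl)
        (div_nonneg hy.1.le ha.le) (show (0:ℝ) ≤ 1 - y / a by linarith)
        (show y / a + (1 - y / a) = 1 by ring)
      simpa [smul_eq_mul, h0, div_mul_cancel₀ _ ha.ne'] using this
    rw [div_le_div_iff₀ hy.1 ha]
    calc Φ y * a ≤ ((y / a) * Φ a) * a := by nlinarith [hy.1.le]
      _ = Φ a * y := by field_simp
  have step1 : ∫⁻ y in Set.Ioo (0 : ℝ) a,
      ENNReal.ofReal ((Φ y / y) * Real.log (a / y) ^ p) ≤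
      ∫⁻ y in Set.Ioo (0 : ℝ) a, ENNReal.ofReal ((Φ a / a) * Real.log (a / y) ^ p) :=
    lintegral_mono_ae ((ae_restrict_iff' measurableSet_Ioo).2 (Filter.Eventually.of_forall hbound))
  -- constant out
  have hca : 0 ≤ Φ a / a := div_nonneg hΦa ha.le
  have step2 : ∫⁻ y in Set.Ioo (0 : ℝ) a, ENNReal.ofReal ((Φ a / a) * Real.log (a / y) ^ p)
      = ENNReal.ofReal (Φ a / a) *
        ∫⁻ y in Set.Ioo (0 : ℝ) a, ENNReal.ofReal (Real.log (a / y) ^ p) := by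
    simp_rw [ENNReal.ofReal_mul hca]
    exact lintegral_const_mul' _ _ ENNReal.ofReal_ne_top
  -- integrability of y ↦ log(a/y)^p on (0, a)
  have himga : (fun u : ℝ => a * u) '' Set.Ioo (0 : ℝ) 1 = Set.Ioo (0 : ℝ) a := by
    ext y
    constructor
    · rintro ⟨u, hu, rfl⟩
      exact ⟨mul_pos ha hu.1, mul_lt_of_lt_one_right ha hu.2⟩
    · rintro ⟨hy0, hya⟩
      exact ⟨y / a, ⟨div_pos hy0 ha, (div_lt_one ha).2 hya⟩, by field_simp⟩
  have hderiva : ∀ u ∈ Set.Ioo (0 : ℝ) 1,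
      HasDerivWithinAt (fun u : ℝ => a * u) a (Set.Ioo (0 : ℝ) 1) u := by
    intro u _
    simpa using ((hasDerivAt_id u).const_mul a).hasDerivWithinAt
  have hinja : Set.InjOn (fun u : ℝ => a * u) (Set.Ioo (0 : ℝ) 1) := fun x _ y _ h =>
    mul_left_cancel₀ ha.ne' h
  have hcongr : ∀ u ∈ Set.Ioo (0 : ℝ) 1,
      |a| • Real.log (a / (a * u)) ^ p = a * (-Real.log u) ^ p := by
    intro u hu
    rw [smul_eq_mul, abs_of_pos ha, div_mul_cancel_left₀ ha.ne', Real.log_inv]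
  have hint : IntegrableOn (fun y : ℝ => Real.log (a / y) ^ p) (Set.Ioo (0 : ℝ) a) := by
    rw [← himga, integrableOn_image_iff_integrableOn_abs_deriv_smul measurableSet_Ioo hderiva hinja]
    exact IntegrableOn.congr_fun (hgs.const_mul a) (fun u hu => (hcongr u hu).symm) measurableSet_Ioo
  have hval : ∫ y in Set.Ioo (0 : ℝ) a, Real.log (a / y) ^ p = a * K := by
    rw [← himga, integral_image_eq_integral_abs_deriv_smul measurableSet_Ioo hderiva hinja]
    rw [setIntegral_congr_fun measurableSet_Ioo hcongr, integral_const_mul]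
  have hnn : (0 : ℝ → ℝ) ≤ᵐ[volume.restrict (Set.Ioo (0:ℝ) a)]
      fun y => Real.log (a / y) ^ p := by
    refine (ae_restrict_iff' measurableSet_Ioo).2 (Filter.Eventually.of_forall fun y hy => ?_)
    exact Real.rpow_nonneg (Real.log_nonneg ((one_le_div hy.1).2 hy.2.le)) _
  have step3 : ∫⁻ y in Set.Ioo (0 : ℝ) a, ENNReal.ofReal (Real.log (a / y) ^ p)
      = ENNReal.ofReal (a * K) := by
    rw [← ofReal_integral_eq_lintegral_ofReal hint hnn, hval]
  calc ∫⁻ y in Set.Ioo (0 : ℝ) a,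
        ENNReal.ofReal ((Φ y / y) * Real.log (a / y) ^ p)
      ≤ ENNReal.ofReal (Φ a / a) * ENNReal.ofReal (a * K) := by
        rw [← step3, ← step2]; exact step1
    _ = ENNReal.ofReal ((Φ a / a) * (a * K)) := (ENNReal.ofReal_mul hca).symm
    _ ≤ ENNReal.ofReal ((K + 1) * Φ a) := by
        apply ENNReal.ofReal_le_ofReal
        have : (Φ a / a) * (a * K) = K * Φ a := by field_simp
        rw [this]; nlinarith
end

section
/- Let Θ be a Young's function and G(x,t) = (4πt)^{-n/2} exp(-|x|²/(4t)) the Gaussian heat kernel on ℝⁿ × (0,∞). Then there exists a constant C = C(n,Θ) > 0 such that for all t > 0, the Luxemburg norm of G(·,t) in the Orlicz space L^Θ(ℝⁿ) satisfies ‖G(·,t)‖_Θ ≤ C t^{-n/2} / Θ^{-1}(t^{-n/2}). -/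
open MeasureTheory ENNReal NNReal

/-- A Young's function: `Φ : [0,∞] → [0,∞]` with `Φ(0) = 0`, nondecreasing,
convex, and not identically zero (on finite points). -/
structure YoungFunction where
  toFun : ℝ≥0∞ → ℝ≥0∞
  map_zero : toFun 0 = 0
  mono : Monotone toFun
  convex : ∀ x y : ℝ≥0∞, ∀ t : ℝ≥0, t ≤ 1 →
    toFun ((t : ℝ≥0∞) * x + ((1 - t : ℝ≥0) : ℝ≥0∞) * y) ≤
      (t : ℝ≥0∞) * toFun x + ((1 - t : ℝ≥0) : ℝ≥0∞) * toFun y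
  nontrivial : ∃ x : ℝ≥0∞, x ≠ ∞ ∧ toFun x ≠ 0

/-- The generalised inverse `Φ⁻¹(y) = inf { x > 0 : Φ(x) > y }` (with `inf ∅ = ∞`). -/
noncomputable def YoungFunction.inv (Φ : YoungFunction) (y : ℝ≥0∞) : ℝ≥0∞ :=
  sInf {x : ℝ≥0∞ | y < Φ.toFun x}

/-- The Luxemburg norm `‖u‖_Φ = inf { k > 0 : ∫ Φ(|u|/k) ≤ 1 }` on `ℝⁿ`. -/
noncomputable def luxNorm {n : ℕ} (Φ : YoungFunction)
    (u : EuclideanSpace ℝ (Fin n) → ℝ) : ℝ≥0∞ :=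
  sInf {k : ℝ≥0∞ | k ≠ 0 ∧ ∫⁻ x, Φ.toFun (ENNReal.ofReal |u x| / k) ≤ 1}

/-- The Gaussian heat kernel `G(x,t) = (4πt)^{-n/2} exp(-|x|²/(4t))` on `ℝⁿ`. -/
noncomputable def gaussKernel {n : ℕ} (t : ℝ) (x : EuclideanSpace ℝ (Fin n)) : ℝ :=
  (4 * Real.pi * t) ^ (-(n : ℝ) / 2) * Real.exp (-‖x‖ ^ 2 / (4 * t))

theorem YoungFunction.scale (Θ : YoungFunction) (x : ℝ≥0∞) (t : ℝ≥0) (ht : t ≤ 1) :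
    Θ.toFun ((t : ℝ≥0∞) * x) ≤ (t : ℝ≥0∞) * Θ.toFun x := by
  have := Θ.convex x 0 t ht
  simpa [Θ.map_zero] using this

theorem YoungFunction.le_of_lt_inv (Θ : YoungFunction) {a x : ℝ≥0∞} (hx : x < Θ.inv a) :
    Θ.toFun x ≤ a := by
  by_contra h
  have h2 : Θ.inv a ≤ x :=
    sInf_le (show x ∈ {y : ℝ≥0∞ | a < Θ.toFun y} from not_le.1 h)
  exact absurd h2 (not_le.2 hx)

theorem YoungFunction.inv_lt_top (Θ : YoungFunction) {a : ℝ≥0∞} (ha : a ≠ ∞) :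
    Θ.inv a < ∞ := by
  obtain ⟨x₀, hx₀fin, hx₀ne⟩ := Θ.nontrivial
  suffices h : ∃ x ∈ {x : ℝ≥0∞ | a < Θ.toFun x}, x < ∞ by
    exact sInf_lt_iff.2 (by simpa using h)
  rcases eq_or_ne (Θ.toFun x₀) ∞ with hT | hT
  · exact ⟨x₀, by simp [hT, lt_top_iff_ne_top, ha], lt_top_iff_ne_top.2 hx₀fin⟩
  · obtain ⟨m, hm⟩ := ENNReal.exists_nat_gt (ENNReal.div_lt_top ha hx₀ne).ne
    have hmne : m ≠ 0 := by
      rintro rfl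
      simp at hm
    have hm1 : 1 ≤ m := Nat.one_le_iff_ne_zero.2 hmne
    have hm0 : (m : ℝ≥0∞) ≠ 0 := by exact_mod_cast hmne
    have hm0' : (m : ℝ≥0) ≠ 0 := by exact_mod_cast hmne
    have hamx : a < (m : ℝ≥0∞) * Θ.toFun x₀ :=
      (ENNReal.div_lt_iff (Or.inl hx₀ne) (Or.inl hT)).1 hm
    have hscale := Θ.scale ((m : ℝ≥0∞) * x₀) ((m : ℝ≥0)⁻¹) (by
      rw [inv_le_one_iff₀]
      right
      exact_mod_cast hm1)
    rw [ENNReal.coe_inv hm0'] at hscale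
    have hcoe : ((m : ℝ≥0) : ℝ≥0∞) = (m : ℝ≥0∞) := by push_cast; ring
    rw [hcoe, ← mul_assoc, ENNReal.inv_mul_cancel hm0 (by simp), one_mul] at hscale
    have h2 : (m : ℝ≥0∞) * Θ.toFun x₀ ≤ Θ.toFun ((m : ℝ≥0∞) * x₀) := by
      calc (m : ℝ≥0∞) * Θ.toFun x₀ ≤ (m : ℝ≥0∞) * ((m : ℝ≥0∞)⁻¹ * Θ.toFun ((m : ℝ≥0∞) * x₀)) :=
            mul_le_mul_right hscale _
        _ = Θ.toFun ((m : ℝ≥0∞) * x₀) := by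
            rw [← mul_assoc, ENNReal.mul_inv_cancel hm0 (by simp), one_mul]
    refine ⟨(m : ℝ≥0∞) * x₀, lt_of_lt_of_le hamx h2, ?_⟩
    exact ENNReal.mul_lt_top (by simp) (lt_top_iff_ne_top.2 hx₀fin)

set_option maxHeartbeats 1000000 in
/-- Orlicz norm estimate for the Gaussian heat kernel: there is `C = C(n,Θ) > 0`
with `‖G(·,t)‖_Θ ≤ C t^{-n/2} / Θ⁻¹(t^{-n/2})` for all `t > 0`. -/
theorem gaussKernel_luxNorm_bound {n : ℕ} (hn : 0 < n) (Θ : YoungFunction) :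
    ∃ C : ℝ, 0 < C ∧ ∀ t : ℝ, 0 < t →
      luxNorm Θ (gaussKernel (n := n) t) ≤
        ENNReal.ofReal C * (ENNReal.ofReal (t ^ (-(n : ℝ) / 2)) /
          Θ.inv (ENNReal.ofReal (t ^ (-(n : ℝ) / 2)))) := by
  refine ⟨2, two_pos, fun t ht => ?_⟩
  set a : ℝ≥0∞ := ENNReal.ofReal (t ^ (-(n : ℝ) / 2)) with ha_def
  have ha0 : a ≠ 0 := by
    simp only [ha_def, ne_eq, ENNReal.ofReal_eq_zero, not_le]
    exact Real.rpow_pos_of_pos ht _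
  have hatop : a ≠ ∞ := ENNReal.ofReal_ne_top
  set b : ℝ≥0∞ := Θ.inv a with hb_def
  have hbtop : b ≠ ∞ := (Θ.inv_lt_top hatop).ne
  rcases eq_or_ne b 0 with hb0 | hb0
  · rw [hb0, ENNReal.div_zero ha0]
    simp [ENNReal.mul_top]
  -- main case
  set k : ℝ≥0∞ := ENNReal.ofReal 2 * (a / b) with hk_def
  have hk0 : k ≠ 0 := by
    simp only [hk_def, ne_eq, mul_eq_zero, not_or, ENNReal.ofReal_eq_zero, not_le,
      ENNReal.div_eq_zero_iff]
    exact ⟨by norm_num, by simp [ha0, hbtop]⟩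
  have hktop : k ≠ ∞ := by
    simp only [hk_def, ne_eq, ENNReal.mul_eq_top, not_or]
    constructor
    · rintro ⟨-, h⟩
      exact (ENNReal.div_eq_top.1 h).elim (fun h => hb0 h.2) (fun h => hatop h.1)
    · rintro ⟨h, -⟩
      exact ENNReal.ofReal_ne_top h
  have hbk : b / 2 * k = a := by
    rw [hk_def]
    rw [show ENNReal.ofReal 2 = (2 : ℝ≥0∞) by norm_num]
    lift b to ℝ≥0 using hbtop with b'
    lift a to ℝ≥0 using hatop with a'
    have hb0' : b' ≠ 0 := by exact_mod_cast hb0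
    rw [show ((2:ℝ≥0∞)) = ((2 : ℝ≥0) : ℝ≥0∞) by norm_num, ← ENNReal.coe_div (by norm_num),
      ← ENNReal.coe_div hb0', ← ENNReal.coe_mul, ← ENNReal.coe_mul]
    congr 1
    field_simp
  have hC : Θ.toFun (b / 2) ≤ a := by
    refine Θ.le_of_lt_inv ?_
    rw [← hb_def]
    exact ENNReal.half_lt_self hb0 hbtop
  set lam : EuclideanSpace ℝ (Fin n) → ℝ :=
    fun x => (4 * Real.pi) ^ (-(n : ℝ) / 2) * Real.exp (-‖x‖ ^ 2 / (4 * t)) with hlam_def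
  have hlam_nonneg : ∀ x, 0 ≤ lam x := fun x => by positivity
  have hlam_le_one : ∀ x, lam x ≤ 1 := by
    intro x
    have h1 : (4 * Real.pi) ^ (-(n : ℝ) / 2) ≤ 1 := by
      apply Real.rpow_le_one_of_one_le_of_nonpos
      · nlinarith [Real.pi_gt_three]
      · have : (0:ℝ) ≤ (n : ℝ) := Nat.cast_nonneg n
        linarith
    have h2 : Real.exp (-‖x‖ ^ 2 / (4 * t)) ≤ 1 := by
      rw [Real.exp_le_one_iff]
      have : (0:ℝ) ≤ ‖x‖ ^ 2 / (4 * t) := by positivity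
      rw [neg_div]
      linarith
    calc lam x ≤ 1 * 1 := by
          apply mul_le_mul h1 h2 (by positivity) (by norm_num)
      _ = 1 := by norm_num
  have hg_eq : ∀ x, ENNReal.ofReal |gaussKernel (n := n) t x| = ENNReal.ofReal (lam x) * a := by
    intro x
    have hgpos : 0 < gaussKernel (n := n) t x := by
      unfold gaussKernel
      positivity
    rw [abs_of_pos hgpos]
    have : gaussKernel (n := n) t x = lam x * t ^ (-(n : ℝ) / 2) := by
      unfold gaussKernel
      rw [hlam_def]
      rw [show (4 * Real.pi * t) = (4 * Real.pi) * t by ring,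
        Real.mul_rpow (by positivity) ht.le]
      ring
    rw [this, ENNReal.ofReal_mul (hlam_nonneg x)]
  -- pointwise bound on Θ
  have hpt : ∀ x, Θ.toFun (ENNReal.ofReal |gaussKernel (n := n) t x| / k) ≤
      a * ENNReal.ofReal (lam x) := by
    intro x
    have hdiv : ENNReal.ofReal |gaussKernel (n := n) t x| / k ≤
        ENNReal.ofReal (lam x) * (b / 2) := by
      rw [hg_eq x, ENNReal.div_le_iff_le_mul (Or.inl hk0) (Or.inl hktop)]
      rw [mul_assoc, hbk]
    have h1 : Θ.toFun (ENNReal.ofReal |gaussKernel (n := n) t x| / k) ≤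
        Θ.toFun (ENNReal.ofReal (lam x) * (b / 2)) := Θ.mono hdiv
    have h2 : Θ.toFun (ENNReal.ofReal (lam x) * (b / 2)) ≤
        ENNReal.ofReal (lam x) * Θ.toFun (b / 2) := by
      have := Θ.scale (b / 2) (lam x).toNNReal (by
        rw [← NNReal.coe_le_coe, Real.coe_toNNReal _ (hlam_nonneg x)]
        exact_mod_cast hlam_le_one x)
      simpa [ENNReal.ofReal] using this
    calc Θ.toFun (ENNReal.ofReal |gaussKernel (n := n) t x| / k)
        ≤ ENNReal.ofReal (lam x) * Θ.toFun (b / 2) := h1.trans h2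
      _ ≤ ENNReal.ofReal (lam x) * a := mul_le_mul_right hC _
      _ = a * ENNReal.ofReal (lam x) := mul_comm _ _
  -- integrability of lam
  have hb' : (0:ℝ) < 1 / (4 * t) := by positivity
  have hInt0 : Integrable (fun v : EuclideanSpace ℝ (Fin n) =>
      Real.exp (-(1 / (4 * t)) * ‖v‖ ^ 2)) := by
    have h := (GaussianFourier.integrable_cexp_neg_mul_sq_norm_add
      (b := ((1 / (4 * t) : ℝ) : ℂ)) (by simpa using hb') 0
      (0 : EuclideanSpace ℝ (Fin n))).norm
    refine h.congr (Filter.Eventually.of_forall fun v => ?_)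
    simp [Complex.norm_exp, ← Complex.ofReal_pow]
  have hInt : Integrable lam := by
    have : lam = fun v : EuclideanSpace ℝ (Fin n) =>
        (4 * Real.pi) ^ (-(n : ℝ) / 2) * Real.exp (-(1 / (4 * t)) * ‖v‖ ^ 2) := by
      funext v
      simp only [hlam_def]
      rw [show -‖v‖ ^ 2 / (4 * t) = -(1 / (4 * t)) * ‖v‖ ^ 2 by ring]
    rw [this]
    exact hInt0.const_mul _
  -- value of the integral
  have hIntVal : ∫ x : EuclideanSpace ℝ (Fin n), lam x =
      (4 * Real.pi) ^ (-(n : ℝ) / 2) * (4 * Real.pi * t) ^ ((n : ℝ) / 2) := by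
    have heq : ∀ x : EuclideanSpace ℝ (Fin n),
        Real.exp (-‖x‖ ^ 2 / (4 * t)) = Real.exp (-(1 / (4 * t)) * ‖x‖ ^ 2) := by
      intro x
      rw [show -‖x‖ ^ 2 / (4 * t) = -(1 / (4 * t)) * ‖x‖ ^ 2 by ring]
    simp_rw [hlam_def, heq]
    rw [integral_const_mul]
    congr 1
    rw [GaussianFourier.integral_rexp_neg_mul_sq_norm hb']
    rw [finrank_euclideanSpace_fin]
    congr 1
    rw [one_div, div_eq_mul_inv, inv_inv]
    ring
  -- the lintegral bound
  have hlint : ∫⁻ x, Θ.toFun (ENNReal.ofReal |gaussKernel (n := n) t x| / k) ≤ 1 := by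
    calc ∫⁻ x, Θ.toFun (ENNReal.ofReal |gaussKernel (n := n) t x| / k)
        ≤ ∫⁻ x, a * ENNReal.ofReal (lam x) := lintegral_mono hpt
      _ = a * ∫⁻ x, ENNReal.ofReal (lam x) := lintegral_const_mul' a _ hatop
      _ = a * ENNReal.ofReal (∫ x, lam x) := by
          rw [ofReal_integral_eq_lintegral_ofReal hInt
            (Filter.Eventually.of_forall hlam_nonneg)]
      _ = 1 := by
          rw [hIntVal, ha_def, ← ENNReal.ofReal_mul (by positivity)]
          have key : t ^ (-(n : ℝ) / 2) *
              ((4 * Real.pi) ^ (-(n : ℝ) / 2) * (4 * Real.pi * t) ^ ((n : ℝ) / 2)) = 1 := by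
            rw [Real.mul_rpow (by positivity) ht.le]
            have e1 : t ^ (-(n : ℝ) / 2) * t ^ ((n : ℝ) / 2) = 1 := by
              rw [← Real.rpow_add ht, show (-(n : ℝ) / 2 + (n : ℝ) / 2) = 0 by ring,
                Real.rpow_zero]
            have e2 : (4 * Real.pi) ^ (-(n : ℝ) / 2) * (4 * Real.pi) ^ ((n : ℝ) / 2) = 1 := by
              rw [← Real.rpow_add (by positivity), show (-(n : ℝ) / 2 + (n : ℝ) / 2) = 0 by ring,
                Real.rpow_zero]
            calc t ^ (-(n : ℝ) / 2) *
                ((4 * Real.pi) ^ (-(n : ℝ) / 2) *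
                  ((4 * Real.pi) ^ ((n : ℝ) / 2) * t ^ ((n : ℝ) / 2)))
                = (t ^ (-(n : ℝ) / 2) * t ^ ((n : ℝ) / 2)) *
                    ((4 * Real.pi) ^ (-(n : ℝ) / 2) * (4 * Real.pi) ^ ((n : ℝ) / 2)) := by ring
              _ = 1 := by rw [e1, e2]; norm_num
          rw [key]
          exact ENNReal.ofReal_one
  have hmem : k ∈ {k : ℝ≥0∞ | k ≠ 0 ∧
      ∫⁻ x, Θ.toFun (ENNReal.ofReal |gaussKernel (n := n) t x| / k) ≤ 1} := ⟨hk0, hlint⟩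
  calc luxNorm Θ (gaussKernel (n := n) t) ≤ k := sInf_le hmem
    _ = ENNReal.ofReal 2 * (a / b) := hk_def
end

section
/- Let Φ be a Young's function. There exists a constant C = C(n,Φ) > 0 such that for all φ ∈ L^Φ(ℝⁿ) and t > 0, ‖S(t)φ‖_∞ ≤ C Φ^{-1}(t^{-n/2}) ‖φ‖_Φ, where S(t) is the heat semigroup. -/
open MeasureTheory ENNReal NNReal

/-- The heat semigroup `S(t)φ = G(·,t) * φ`, with `S(0) = id`. -/
noncomputable def heatS {n : ℕ} (t : ℝ) (φ : EuclideanSpace ℝ (Fin n) → ℝ) :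
    EuclideanSpace ℝ (Fin n) → ℝ :=
  if t = 0 then φ else fun x => ∫ y, gaussKernel t (x - y) * φ y

section AuxLemmas

lemma YoungFunction.smul_le (Φ : YoungFunction) {m : ℝ≥0} (hm : 1 ≤ m) (x : ℝ≥0∞) :
    (m : ℝ≥0∞) * Φ.toFun x ≤ Φ.toFun ((m : ℝ≥0∞) * x) := by
  have hm0 : m ≠ 0 := by rintro rfl; simp at hm
  have h := Φ.convex ((m : ℝ≥0∞) * x) 0 m⁻¹ (by
    rw [inv_le_one_iff₀]; exact Or.inr hm)
  simp only [Φ.map_zero, mul_zero, add_zero] at h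
  rw [← mul_assoc, ← ENNReal.coe_mul, inv_mul_cancel₀ hm0, ENNReal.coe_one, one_mul] at h
  calc (m : ℝ≥0∞) * Φ.toFun x
      ≤ (m : ℝ≥0∞) * (((m⁻¹ : ℝ≥0) : ℝ≥0∞) * Φ.toFun ((m : ℝ≥0∞) * x)) :=
        mul_le_mul_right h _
    _ = Φ.toFun ((m : ℝ≥0∞) * x) := by
        rw [← mul_assoc, ← ENNReal.coe_mul, mul_inv_cancel₀ hm0, ENNReal.coe_one, one_mul]

lemma YoungFunction.top_eq (Φ : YoungFunction) : Φ.toFun ⊤ = ⊤ := by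
  obtain ⟨x₀, hx₀t, hx₀⟩ := Φ.nontrivial
  by_contra h
  have hc : Φ.toFun x₀ ≠ ⊤ := by
    intro he
    have hmo : Φ.toFun x₀ ≤ Φ.toFun ⊤ := Φ.mono le_top
    rw [he] at hmo
    exact h (top_le_iff.1 hmo)
  obtain ⟨k, hk⟩ := ENNReal.exists_nat_gt (ENNReal.div_lt_top h hx₀).ne
  have h1 : Φ.toFun ⊤ < (k : ℝ≥0∞) * Φ.toFun x₀ := by
    rwa [ENNReal.div_lt_iff (Or.inl hx₀) (Or.inl hc)] at hk
  have hk1 : 1 ≤ k := by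
    by_contra hk1
    interval_cases k
    simp at h1
  have h2 : (k : ℝ≥0∞) * Φ.toFun x₀ ≤ Φ.toFun ⊤ := by
    have := Φ.smul_le (m := (k : ℝ≥0)) (by exact_mod_cast hk1) x₀
    have h3 : Φ.toFun (((k : ℝ≥0) : ℝ≥0∞) * x₀) ≤ Φ.toFun ⊤ := Φ.mono le_top
    calc (k : ℝ≥0∞) * Φ.toFun x₀ = ((k : ℝ≥0) : ℝ≥0∞) * Φ.toFun x₀ := by push_cast; ring
      _ ≤ Φ.toFun (((k : ℝ≥0) : ℝ≥0∞) * x₀) := this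
      _ ≤ Φ.toFun ⊤ := h3
  exact absurd (h2.trans_lt h1) (lt_irrefl _)

lemma YoungFunction.slope (Φ : YoungFunction) {A x : ℝ≥0∞} (hA0 : A ≠ 0) (hAt : A ≠ ⊤)
    (hAx : A ≤ x) : Φ.toFun A * x ≤ A * Φ.toFun x := by
  rcases eq_or_ne (Φ.toFun A) 0 with h0 | h0
  · simp [h0]
  rcases eq_or_ne x ⊤ with rfl | hxt
  · rw [Φ.top_eq, ENNReal.mul_top hA0]; exact le_top
  have hx0 : x ≠ 0 := fun e => hA0 (le_antisymm (e ▸ hAx) zero_le)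
  have hst : A / x ≠ ⊤ := (ENNReal.div_lt_top hAt hx0).ne
  have hs1 : A / x ≤ 1 := ENNReal.div_le_of_le_mul (by simpa using hAx)
  set s : ℝ≥0 := (A / x).toNNReal with hsdef
  have hco : (s : ℝ≥0∞) = A / x := ENNReal.coe_toNNReal hst
  have hs1' : s ≤ 1 := by
    have : (s : ℝ≥0∞) ≤ 1 := by rw [hco]; exact hs1
    exact_mod_cast this
  have h := Φ.convex x 0 s hs1'
  simp only [Φ.map_zero, mul_zero, add_zero] at h
  rw [hco] at h
  rw [ENNReal.div_mul_cancel hx0 hxt] at h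
  calc Φ.toFun A * x ≤ (A / x * Φ.toFun x) * x := mul_le_mul_left h x
    _ = (A / x * x) * Φ.toFun x := by ring
    _ = A * Φ.toFun x := by rw [ENNReal.div_mul_cancel hx0 hxt]

end AuxLemmas
section CoreLemmas

lemma ennreal_le_mul_of_forall_lt {b c N : ℝ≥0∞} (hN0 : N ≠ 0) (hNt : N ≠ ⊤)
    (H : ∀ k, N < k → k ≠ ⊤ → b ≤ c * k) : b ≤ c * N := by
  rcases eq_or_ne c 0 with rfl | hc0
  · have := H (N + 1) (ENNReal.lt_add_right hNt one_ne_zero)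
      (ENNReal.add_ne_top.2 ⟨hNt, ENNReal.one_ne_top⟩)
    simpa using this
  rcases eq_or_ne c ⊤ with rfl | hct
  · rw [ENNReal.top_mul hN0]; exact le_top
  refine ENNReal.le_of_forall_pos_le_add fun ε hε _ => ?_
  have hεc : (ε : ℝ≥0∞) / c ≠ 0 := by
    simp [ENNReal.div_eq_zero_iff, hct, hε.ne']
  have hk := H (N + (ε : ℝ≥0∞) / c) (ENNReal.lt_add_right hNt hεc)
    (ENNReal.add_ne_top.2 ⟨hNt, (ENNReal.div_lt_top ENNReal.coe_ne_top hc0).ne⟩)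
  calc b ≤ c * (N + (ε : ℝ≥0∞) / c) := hk
    _ = c * N + c * ((ε : ℝ≥0∞) / c) := mul_add _ _ _
    _ = c * N + ε := by rw [ENNReal.mul_div_cancel hc0 hct]

lemma ennreal_le_two_mul_sInf {m : ℝ≥0∞} {s : Set ℝ≥0∞} (H : ∀ A ∈ s, m ≤ 2 * A) :
    m ≤ 2 * sInf s := by
  by_contra hcon
  push_neg at hcon
  have h2 : sInf s < m / 2 := by
    rw [ENNReal.lt_div_iff_mul_lt (Or.inl two_ne_zero) (Or.inl ENNReal.ofNat_ne_top)]
    rwa [mul_comm]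
  obtain ⟨A, hAs, hA⟩ := sInf_lt_iff.1 h2
  have h3 : m / 2 ≤ A := by
    have := H A hAs
    rw [ENNReal.div_le_iff_le_mul (Or.inl two_ne_zero) (Or.inl ENNReal.ofNat_ne_top)]
    rwa [mul_comm]
  exact absurd (h3.trans_lt hA) (lt_irrefl _)

lemma core_bound (Φ : YoungFunction) {α : Type*} [MeasurableSpace α] {μ : Measure α}
    {W h : α → ℝ≥0∞} (hW : Measurable W) (hh : Measurable h)
    {c : ℝ≥0∞} (hct : c ≠ ⊤) (hW1 : ∫⁻ a, W a ∂μ ≤ 1) (hWc : ∀ a, W a ≤ c)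
    (hΦh : ∫⁻ a, Φ.toFun (h a) ∂μ ≤ 1)
    {A : ℝ≥0∞} (hAt : A ≠ ⊤) (hA : c < Φ.toFun A) :
    ∫⁻ a, W a * h a ∂μ ≤ 2 * A := by
  have hΦA0 : Φ.toFun A ≠ 0 := ((zero_le (a := c)).trans_lt hA).ne'
  have hA0 : A ≠ 0 := fun e => hΦA0 (by rw [e, Φ.map_zero])
  have hΦmeas : Measurable Φ.toFun := Φ.mono.measurable
  set S : Set α := {a | A < h a} with hS
  have hSm : MeasurableSet S := hh measurableSet_Ioi
  set T : ℝ≥0∞ := ∫⁻ a in S, W a * h a ∂μ with hT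
  have step1 : ∫⁻ a, W a * h a ∂μ ≤ A + T := by
    have hpt : ∀ a, W a * h a ≤ W a * A + S.indicator (fun a => W a * h a) a := by
      intro a
      by_cases hmem : a ∈ S
      · rw [Set.indicator_of_mem hmem]
        exact le_add_self
      · rw [Set.indicator_of_notMem hmem, add_zero]
        exact mul_le_mul_right (le_of_not_gt hmem) _
    calc ∫⁻ a, W a * h a ∂μ
        ≤ ∫⁻ a, (W a * A + S.indicator (fun a => W a * h a) a) ∂μ := lintegral_mono hpt
      _ = (∫⁻ a, W a * A ∂μ) + ∫⁻ a, S.indicator (fun a => W a * h a) a ∂μ :=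
          lintegral_add_left (hW.mul_const A) _
      _ ≤ A + T := by
          rw [lintegral_indicator hSm, lintegral_mul_const A hW]
          exact add_le_add_left (by simpa using mul_le_mul_left hW1 A) _
  have key : Φ.toFun A * T ≤ A * c := by
    calc Φ.toFun A * T = ∫⁻ a in S, Φ.toFun A * (W a * h a) ∂μ :=
          (lintegral_const_mul _ (hW.mul hh)).symm
      _ ≤ ∫⁻ a in S, (A * c) * Φ.toFun (h a) ∂μ := by
          refine setLIntegral_mono (measurable_const.mul (hΦmeas.comp hh)) fun a ha => ?_
          calc Φ.toFun A * (W a * h a) = (Φ.toFun A * h a) * W a := by ring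
            _ ≤ (A * Φ.toFun (h a)) * W a :=
              mul_le_mul_left (Φ.slope hA0 hAt (le_of_lt ha)) _
            _ ≤ (A * Φ.toFun (h a)) * c := mul_le_mul_right (hWc a) _
            _ = (A * c) * Φ.toFun (h a) := by ring
      _ = (A * c) * ∫⁻ a in S, Φ.toFun (h a) ∂μ := lintegral_const_mul _ (hΦmeas.comp hh)
      _ ≤ (A * c) * 1 := mul_le_mul_right ((setLIntegral_le_lintegral _ _).trans hΦh) _
      _ = A * c := mul_one _
  have step2 : T ≤ A := by
    rcases eq_or_ne (Φ.toFun A) ⊤ with htop | hfin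
    · have hT0 : T = 0 := by
        by_contra hT0
        rw [htop, ENNReal.top_mul hT0] at key
        exact ENNReal.mul_ne_top hAt hct (top_le_iff.1 key)
      rw [hT0]; exact zero_le
    · have key2 : Φ.toFun A * T ≤ Φ.toFun A * A := by
        refine key.trans ?_
        rw [mul_comm (Φ.toFun A) A]
        exact mul_le_mul_right hA.le A
      exact (ENNReal.mul_le_mul_iff_right hΦA0 hfin).1 key2
  calc ∫⁻ a, W a * h a ∂μ ≤ A + T := step1
    _ ≤ A + A := add_le_add_right step2 _
    _ = 2 * A := (two_mul A).symm

end CoreLemmas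
section GaussLemmas

variable {n : ℕ}

lemma gaussKernel_nonneg {t : ℝ} (ht : 0 < t) (z : EuclideanSpace ℝ (Fin n)) :
    0 ≤ gaussKernel t z := by
  unfold gaussKernel
  have h4 : (0:ℝ) < 4 * Real.pi * t := by positivity
  positivity

lemma gaussKernel_le {t : ℝ} (ht : 0 < t) (z : EuclideanSpace ℝ (Fin n)) :
    gaussKernel t z ≤ (4 * Real.pi * t) ^ (-(n : ℝ) / 2) := by
  unfold gaussKernel
  have h4 : (0:ℝ) < 4 * Real.pi * t := by positivity
  have h1 : Real.exp (-‖z‖ ^ 2 / (4 * t)) ≤ 1 := by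
    rw [Real.exp_le_one_iff]
    apply div_nonpos_of_nonpos_of_nonneg
    · simp [sq_nonneg]
    · positivity
  calc (4 * Real.pi * t) ^ (-(n : ℝ) / 2) * Real.exp (-‖z‖ ^ 2 / (4 * t))
      ≤ (4 * Real.pi * t) ^ (-(n : ℝ) / 2) * 1 :=
        mul_le_mul_of_nonneg_left h1 (le_of_lt (Real.rpow_pos_of_pos h4 _))
    _ = (4 * Real.pi * t) ^ (-(n : ℝ) / 2) := mul_one _

lemma gaussKernel_continuous {t : ℝ} : Continuous (gaussKernel (n := n) t) := by
  unfold gaussKernel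
  fun_prop

lemma gaussKernel_exp_integrable {t : ℝ} (ht : 0 < t) :
    Integrable (fun v : EuclideanSpace ℝ (Fin n) =>
      Real.exp (-(1 / (4 * t)) * ‖v‖ ^ 2)) := by
  have hb : (0:ℝ) < 1 / (4 * t) := by positivity
  have hcI := GaussianFourier.integrable_cexp_neg_mul_sq_norm_add
    (V := EuclideanSpace ℝ (Fin n)) (b := ((1 / (4 * t) : ℝ) : ℂ))
    (by simpa using hb) 0 (0 : EuclideanSpace ℝ (Fin n))
  simp only [zero_mul, add_zero] at hcI
  refine hcI.re.congr (Filter.Eventually.of_forall fun v => ?_)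
  show RCLike.re (Complex.exp (-((1 / (4 * t) : ℝ) : ℂ) * (‖v‖ : ℂ) ^ 2))
      = Real.exp (-(1 / (4 * t)) * ‖v‖ ^ 2)
  rw [show (-((1 / (4 * t) : ℝ) : ℂ) * (‖v‖ : ℂ) ^ 2)
      = ((-(1 / (4 * t)) * ‖v‖ ^ 2 : ℝ) : ℂ) by push_cast; ring]
  exact Complex.exp_ofReal_re _

lemma gaussKernel_integrable {t : ℝ} (ht : 0 < t) :
    Integrable (gaussKernel (n := n) t) := by
  have heq : (gaussKernel (n := n) t) = fun v =>
      (4 * Real.pi * t) ^ (-(n : ℝ) / 2) * Real.exp (-(1 / (4 * t)) * ‖v‖ ^ 2) := by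
    funext v
    unfold gaussKernel
    congr 1
    ring
  rw [heq]
  exact (gaussKernel_exp_integrable (n := n) ht).const_mul _

lemma gaussKernel_integral {t : ℝ} (ht : 0 < t) :
    ∫ z : EuclideanSpace ℝ (Fin n), gaussKernel t z = 1 := by
  have hb : (0:ℝ) < 1 / (4 * t) := by positivity
  have h4 : (0:ℝ) < 4 * Real.pi * t := by positivity
  calc ∫ z : EuclideanSpace ℝ (Fin n), gaussKernel t z
      = ∫ z : EuclideanSpace ℝ (Fin n),
          (4 * Real.pi * t) ^ (-(n : ℝ) / 2) * Real.exp (-(1 / (4 * t)) * ‖z‖ ^ 2) := by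
        refine integral_congr_ae (Filter.Eventually.of_forall fun z => ?_)
        unfold gaussKernel
        congr 2
        ring
    _ = (4 * Real.pi * t) ^ (-(n : ℝ) / 2) *
          ∫ z : EuclideanSpace ℝ (Fin n), Real.exp (-(1 / (4 * t)) * ‖z‖ ^ 2) :=
        integral_const_mul _ _
    _ = (4 * Real.pi * t) ^ (-(n : ℝ) / 2) *
          (Real.pi / (1 / (4 * t))) ^ ((Module.finrank ℝ (EuclideanSpace ℝ (Fin n)) : ℝ) / 2) := by
        rw [GaussianFourier.integral_rexp_neg_mul_sq_norm hb]
    _ = 1 := by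
        rw [finrank_euclideanSpace_fin]
        rw [show Real.pi / (1 / (4 * t)) = 4 * Real.pi * t by field_simp]
        rw [← Real.rpow_add h4]
        rw [show -(n : ℝ) / 2 + (n : ℝ) / 2 = 0 by ring, Real.rpow_zero]

lemma gaussKernel_lintegral {t : ℝ} (ht : 0 < t) (x : EuclideanSpace ℝ (Fin n)) :
    ∫⁻ y, ENNReal.ofReal (gaussKernel t (x - y)) = 1 := by
  have hmeas : Measurable fun z : EuclideanSpace ℝ (Fin n) =>
      ENNReal.ofReal (gaussKernel t z) :=
    ENNReal.measurable_ofReal.comp gaussKernel_continuous.measurable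
  have hsub : Measurable fun y : EuclideanSpace ℝ (Fin n) => x - y :=
    measurable_id.const_sub x
  have hmap : Measure.map (fun y : EuclideanSpace ℝ (Fin n) => x - y) volume = volume :=
    Measure.map_sub_left_eq_self volume x
  have := lintegral_map (μ := (volume : Measure (EuclideanSpace ℝ (Fin n)))) hmeas hsub
  rw [hmap] at this
  rw [← this]
  rw [← ofReal_integral_eq_lintegral_ofReal (gaussKernel_integrable ht)
    (Filter.Eventually.of_forall (gaussKernel_nonneg ht))]
  rw [gaussKernel_integral ht, ENNReal.ofReal_one]

end GaussLemmas
section LuxZero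

lemma luxNorm_eq_zero_ae {n : ℕ} (Φ : YoungFunction) {φ : EuclideanSpace ℝ (Fin n) → ℝ}
    (hm : Measurable φ) (h0 : luxNorm Φ φ = 0) : ∀ᵐ x, φ x = 0 := by
  obtain ⟨x₀, hx₀t, hx₀⟩ := Φ.nontrivial
  have hx₀0 : x₀ ≠ 0 := fun e => hx₀ (by rw [e, Φ.map_zero])
  have key : ∀ ε : ℝ, 0 < ε → volume {x : EuclideanSpace ℝ (Fin n) | ε < |φ x|} = 0 := by
    intro ε hε
    by_contra hδ
    set E := {x : EuclideanSpace ℝ (Fin n) | ε < |φ x|} with hE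
    have hEm : MeasurableSet E := measurableSet_lt measurable_const hm.abs
    set δ := volume E with hδdef
    have hcδ : Φ.toFun x₀ * δ ≠ 0 := by
      simp only [ne_eq, mul_eq_zero, not_or]
      exact ⟨hx₀, hδ⟩
    obtain ⟨m, hm'⟩ := ENNReal.exists_nat_gt (r := (Φ.toFun x₀ * δ)⁻¹)
      (ENNReal.inv_ne_top.2 hcδ)
    set M : ℕ := m + 1 with hM
    have hM0 : (M : ℝ≥0∞) ≠ 0 := by
      simp [hM]
    have hMt : (M : ℝ≥0∞) ≠ ⊤ := ENNReal.natCast_ne_top M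
    have hm'' : (Φ.toFun x₀ * δ)⁻¹ < (M : ℝ≥0∞) := by
      refine hm'.trans_le ?_
      exact_mod_cast Nat.le_succ m
    have hMgt : 1 < (M : ℝ≥0∞) * (Φ.toFun x₀ * δ) := by
      have hinv : ((M : ℝ≥0∞))⁻¹ < Φ.toFun x₀ * δ := ENNReal.inv_lt_iff_inv_lt.1 hm''
      have := ENNReal.mul_lt_mul_right (a := (M : ℝ≥0∞)) hM0 hMt hinv
      rwa [ENNReal.mul_inv_cancel hM0 hMt] at this
    have hMx₀t : (M : ℝ≥0∞) * x₀ ≠ ⊤ := ENNReal.mul_ne_top hMt hx₀t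
    have hMx₀0 : (M : ℝ≥0∞) * x₀ ≠ 0 := by
      simp [hM0, hx₀0]
    have hpos : (0 : ℝ≥0∞) < ENNReal.ofReal ε / ((M : ℝ≥0∞) * x₀) :=
      ENNReal.div_pos (by simp [hε]) hMx₀t
    have h1 : sInf {k : ℝ≥0∞ | k ≠ 0 ∧ ∫⁻ x, Φ.toFun (ENNReal.ofReal |φ x| / k) ≤ 1}
        < ENNReal.ofReal ε / ((M : ℝ≥0∞) * x₀) := by
      have : luxNorm Φ φ < ENNReal.ofReal ε / ((M : ℝ≥0∞) * x₀) := by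
        rw [h0]; exact hpos
      exact this
    obtain ⟨k, hkS, hklt⟩ := sInf_lt_iff.1 h1
    obtain ⟨hk0, hkint⟩ := hkS
    have hbt : ENNReal.ofReal ε / ((M : ℝ≥0∞) * x₀) < ⊤ :=
      ENNReal.div_lt_top ENNReal.ofReal_ne_top hMx₀0
    have hkt : k ≠ ⊤ := (hklt.trans hbt).ne
    have hmul : ((M : ℝ≥0∞) * x₀) * k ≤ ENNReal.ofReal ε := by
      have h2 := ENNReal.mul_lt_of_lt_div hklt
      rw [mul_comm] at h2
      exact h2.le
    have key2 : ∀ x ∈ E, (M : ℝ≥0∞) * x₀ ≤ ENNReal.ofReal |φ x| / k := by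
      intro x hx
      have h1 : (M : ℝ≥0∞) * x₀ ≤ ENNReal.ofReal ε / k :=
        (ENNReal.le_div_iff_mul_le (Or.inl hk0) (Or.inl hkt)).2 hmul
      exact h1.trans (ENNReal.div_le_div_right (ENNReal.ofReal_le_ofReal hx.le) k)
    have key3 : ∀ x ∈ E, (M : ℝ≥0∞) * Φ.toFun x₀ ≤ Φ.toFun (ENNReal.ofReal |φ x| / k) := by
      intro x hx
      have hMge : (1 : ℝ≥0) ≤ (M : ℝ≥0) := by
        exact_mod_cast Nat.one_le_iff_ne_zero.2 (by simp [hM])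
      have hs := Φ.smul_le hMge x₀
      have hcast : (((M : ℝ≥0) : ℝ≥0∞)) = (M : ℝ≥0∞) := by push_cast; rfl
      rw [hcast] at hs
      exact hs.trans (Φ.mono (key2 x hx))
    have hcontr : (M : ℝ≥0∞) * Φ.toFun x₀ * δ ≤ 1 := by
      calc (M : ℝ≥0∞) * Φ.toFun x₀ * δ
          = ∫⁻ _ in E, (M : ℝ≥0∞) * Φ.toFun x₀ ∂volume := (setLIntegral_const E _).symm
        _ ≤ ∫⁻ x in E, Φ.toFun (ENNReal.ofReal |φ x| / k) ∂volume :=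
            setLIntegral_mono (Φ.mono.measurable.comp
              ((ENNReal.measurable_ofReal.comp hm.abs).div_const k)) key3
        _ ≤ ∫⁻ x, Φ.toFun (ENNReal.ofReal |φ x| / k) ∂volume := setLIntegral_le_lintegral _ _
        _ ≤ 1 := hkint
    rw [← mul_assoc] at hMgt
    exact lt_irrefl _ (hMgt.trans_le hcontr)
  rw [ae_iff]
  have hsub : {x : EuclideanSpace ℝ (Fin n) | ¬ φ x = 0} ⊆
      ⋃ j : ℕ, {x : EuclideanSpace ℝ (Fin n) | 1 / ((j : ℝ) + 1) < |φ x|} := by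
    intro x hx
    have hpos : 0 < |φ x| := abs_pos.2 hx
    obtain ⟨j, hj⟩ := exists_nat_one_div_lt hpos
    exact Set.mem_iUnion.2 ⟨j, hj⟩
  refine measure_mono_null hsub (measure_iUnion_null fun j => key _ (by positivity))

end LuxZero
/-- `L^Φ`-`L^∞` smoothing of the heat semigroup: there exists `C = C(n,Φ) > 0`
such that `‖S(t)φ‖_∞ ≤ C Φ⁻¹(t^{-n/2}) ‖φ‖_Φ` for all `φ ∈ L^Φ(ℝⁿ)` and `t > 0`. -/
theorem heat_semigroup_Linfty_smoothing {n : ℕ} (hn : 0 < n) (Φ : YoungFunction) :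
    ∃ C : ℝ, 0 < C ∧ ∀ φ : EuclideanSpace ℝ (Fin n) → ℝ, Measurable φ →
      luxNorm Φ φ ≠ ⊤ → ∀ t : ℝ, 0 < t →
      eLpNorm (heatS t φ) ⊤ volume ≤
        ENNReal.ofReal C * Φ.inv (ENNReal.ofReal (t ^ (-(n : ℝ) / 2))) *
          luxNorm Φ φ := by
  refine ⟨2, by norm_num, fun φ hφm hφt t ht => ?_⟩
  have htne : t ≠ 0 := ht.ne'
  rcases eq_or_ne (luxNorm Φ φ) 0 with hN0 | hN0
  · -- trivial case : φ = 0 a.e.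
    have hae := luxNorm_eq_zero_ae Φ hφm hN0
    have hzero : heatS t φ = fun _ => (0 : ℝ) := by
      funext x
      unfold heatS
      rw [if_neg htne]
      refine integral_eq_zero_of_ae ?_
      filter_upwards [hae] with y hy
      simp [hy]
    have h00 : (fun _ : EuclideanSpace ℝ (Fin n) => (0 : ℝ))
        = (0 : EuclideanSpace ℝ (Fin n) → ℝ) := rfl
    rw [hzero, h00, eLpNorm_zero]
    exact zero_le
  · -- main case
    set y₀ := ENNReal.ofReal (t ^ (-(n : ℝ) / 2)) with hy₀
    set B := 2 * Φ.inv y₀ with hB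
    set c : ℝ≥0∞ := ENNReal.ofReal ((4 * Real.pi * t) ^ (-(n : ℝ) / 2)) with hcdef
    have hcy : c ≤ y₀ := by
      rw [hcdef, hy₀]
      apply ENNReal.ofReal_le_ofReal
      have hexp : -(n : ℝ) / 2 ≤ 0 := by
        have : (0 : ℝ) ≤ (n : ℝ) := Nat.cast_nonneg n
        linarith
      rw [Real.mul_rpow (by positivity) ht.le]
      calc (4 * Real.pi) ^ (-(n : ℝ) / 2) * t ^ (-(n : ℝ) / 2)
          ≤ 1 * t ^ (-(n : ℝ) / 2) := by
            refine mul_le_mul_of_nonneg_right ?_ (Real.rpow_nonneg ht.le _)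
            exact Real.rpow_le_one_of_one_le_of_nonpos
              (by nlinarith [Real.pi_gt_three]) hexp
        _ = t ^ (-(n : ℝ) / 2) := one_mul _
    have hgoal : eLpNorm (heatS t φ) ⊤ volume ≤ B * luxNorm Φ φ := by
      apply ennreal_le_mul_of_forall_lt hN0 hφt
      intro k hNk hkt
      have hk0 : k ≠ 0 := fun e => by simp [e] at hNk
      have hkint : ∫⁻ x, Φ.toFun (ENNReal.ofReal |φ x| / k) ≤ 1 := by
        obtain ⟨k', hk'S, hk'lt⟩ := sInf_lt_iff.1 (show luxNorm Φ φ < k from hNk)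
        refine le_trans (lintegral_mono fun x => Φ.mono ?_) hk'S.2
        exact ENNReal.div_le_div_left hk'lt.le _
      have hhmeas : Measurable fun y : EuclideanSpace ℝ (Fin n) =>
          ENNReal.ofReal |φ y| / k :=
        (ENNReal.measurable_ofReal.comp hφm.abs).div_const k
      have hpt : ∀ x, (‖heatS t φ x‖₊ : ℝ≥0∞) ≤ B * k := by
        intro x
        have hWmeas : Measurable fun y : EuclideanSpace ℝ (Fin n) =>
            ENNReal.ofReal (gaussKernel t (x - y)) :=
          ENNReal.measurable_ofReal.comp
            (gaussKernel_continuous.measurable.comp (measurable_id.const_sub x))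
        have hhs : heatS t φ x = ∫ y, gaussKernel t (x - y) * φ y := by
          unfold heatS
          rw [if_neg htne]
        rw [hhs]
        refine le_trans (enorm_integral_le_lintegral_enorm _) ?_
        have heqint : ∫⁻ y, (‖gaussKernel t (x - y) * φ y‖₊ : ℝ≥0∞)
            = ∫⁻ y, (ENNReal.ofReal (gaussKernel t (x - y)) *
                (ENNReal.ofReal |φ y| / k)) * k := by
          refine lintegral_congr fun y => ?_
          rw [mul_assoc, ENNReal.div_mul_cancel hk0 hkt]
          change ‖gaussKernel t (x - y) * φ y‖ₑ = _
          rw [Real.enorm_eq_ofReal_abs, abs_mul,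
            abs_of_nonneg (gaussKernel_nonneg ht _),
            ENNReal.ofReal_mul (gaussKernel_nonneg ht _)]
        rw [show ∫⁻ y, ‖gaussKernel t (x - y) * φ y‖ₑ = _ from heqint, lintegral_mul_const' _ _ hkt]
        refine mul_le_mul_left ?_ k
        rw [hB]
        unfold YoungFunction.inv
        refine ennreal_le_two_mul_sInf fun A hA => ?_
        rcases eq_or_ne A ⊤ with rfl | hAt
        · rw [ENNReal.mul_top two_ne_zero]
          exact le_top
        · refine core_bound Φ hWmeas hhmeas ENNReal.ofReal_ne_top
            (le_of_eq (gaussKernel_lintegral ht x))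
            (fun a => ENNReal.ofReal_le_ofReal (gaussKernel_le ht _)) hkint hAt ?_
          exact lt_of_le_of_lt hcy hA
      rw [eLpNorm_exponent_top]
      exact essSup_le_of_ae_le _ (Filter.Eventually.of_forall hpt)
    calc eLpNorm (heatS t φ) ⊤ volume ≤ B * luxNorm Φ φ := hgoal
      _ = ENNReal.ofReal 2 * Φ.inv y₀ * luxNorm Φ φ := by
          rw [hB, show ENNReal.ofReal (2 : ℝ) = (2 : ℝ≥0∞) by norm_num]
end

section
/- Let f : ℝ → ℝ be C¹, positive and convex on (0,∞), with 1/f integrable at infinity, and set F(u) = ∫_u^∞ ds/f(s). Suppose f grows faster than every polynomial at infinity (u^{-k} f(u) → ∞ for every k > 0) and that lim_{u→∞} f'(u)F(u) =: A exists and is finite. Then A = 1. -/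
open Filter MeasureTheory

/-- Let `f : ℝ → ℝ` be `C¹`, positive and convex on `(0,∞)`, with `1/f`
integrable at infinity, and set `F(u) = ∫_u^∞ ds/f(s)`. If `f` grows faster
than every polynomial and `f'(u)F(u) → A` as `u → ∞` with `A` finite,
then `A = 1`. -/
theorem limit_of_derivMul_is_one (f : ℝ → ℝ) (hf : ContDiff ℝ 1 f)
    (hpos : ∀ x > (0 : ℝ), 0 < f x) (hconv : ConvexOn ℝ (Set.Ioi 0) f)
    (hint : ∀ u > (0 : ℝ), IntegrableOn (fun s => (f s)⁻¹) (Set.Ioi u))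
    (hsuper : ∀ k : ℝ, 0 < k →
      Tendsto (fun u => u ^ (-k) * f u) atTop atTop)
    (A : ℝ)
    (hA : Tendsto (fun u => deriv f u * ∫ s in Set.Ioi u, (f s)⁻¹)
      atTop (nhds A)) :
    A = 1 := by
  set F : ℝ → ℝ := fun u => ∫ s in Set.Ioi u, (f s)⁻¹ with hFdef
  have hfc : Continuous f := hf.continuous
  have hinvc : ∀ u > (0:ℝ), ContinuousAt (fun s => (f s)⁻¹) u := fun u hu =>
    hfc.continuousAt.inv₀ (hpos u hu).ne'
  -- interval integrability of 1/f on positive intervals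
  have hii : ∀ a b : ℝ, 0 < a → a ≤ b →
      IntervalIntegrable (fun s => (f s)⁻¹) volume a b := by
    intro a b ha hab
    apply ContinuousOn.intervalIntegrable
    intro x hx
    rw [Set.uIcc_of_le hab] at hx
    exact (hinvc x (ha.trans_le hx.1)).continuousWithinAt
  -- splitting the integral
  have hsplit : ∀ a b : ℝ, 0 < a → a ≤ b →
      F a = (∫ s in a..b, (f s)⁻¹) + F b := by
    intro a b ha hab
    have hb : 0 < b := ha.trans_le hab
    rw [hFdef]
    simp only
    rw [intervalIntegral.integral_of_le hab, ← Set.Ioc_union_Ioi_eq_Ioi hab]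
    exact setIntegral_union Set.Ioc_disjoint_Ioi_same measurableSet_Ioi
      ((hint a ha).mono_set Set.Ioc_subset_Ioi_self) (hint b hb)
  -- derivative of F
  have hFderiv : ∀ u > (0:ℝ), HasDerivAt F (-(f u)⁻¹) u := by
    intro u hu
    have ha : (0:ℝ) < u/2 := by linarith
    have hau : u/2 < u := by linarith
    have h1 : HasDerivAt (fun x => F (u/2) - ∫ s in (u/2)..x, (f s)⁻¹)
        (-(f u)⁻¹) u := by
      exact ((intervalIntegral.integral_hasDerivAt_right (hii _ u ha hau.le)
        (ContinuousAt.stronglyMeasurableAtFilter isOpen_Ioi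
          (fun x hx => hinvc x hx) u hu) (hinvc u hu))).const_sub _
    apply h1.congr_of_eventuallyEq
    filter_upwards [isOpen_Ioi.eventually_mem (show u ∈ Set.Ioi (u/2) from hau)]
      with x hx
    have := hsplit (u/2) x ha (le_of_lt hx)
    linarith
  -- positivity of F
  have hFpos : ∀ u > (0:ℝ), 0 < F u := by
    intro u hu
    refine (setIntegral_pos_iff_support_of_nonneg_ae ?_ (hint u hu)).2 ?_
    · filter_upwards [ae_restrict_mem measurableSet_Ioi] with x hx
      exact (inv_pos.2 (hpos x (hu.trans hx))).le
    · have hsub : Set.Ioi u ⊆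
          Function.support (fun s => (f s)⁻¹) ∩ Set.Ioi u := fun x hx =>
        ⟨(inv_pos.2 (hpos x (hu.trans hx))).ne', hx⟩
      refine lt_of_lt_of_le ?_ (measure_mono hsub)
      simp [Real.volume_Ioi]
  set G : ℝ → ℝ := fun u => f u * F u with hGdef
  have hGpos : ∀ u > (0:ℝ), 0 < G u := fun u hu =>
    mul_pos (hpos u hu) (hFpos u hu)
  have hGderiv : ∀ u > (0:ℝ), HasDerivAt G (deriv f u * F u - 1) u := by
    intro u hu
    have h1 : HasDerivAt f (deriv f u) u :=
      ((hf.differentiable one_ne_zero) u).hasDerivAt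
    have h2 := h1.mul (hFderiv u hu)
    have : f u * -(f u)⁻¹ = -1 := by
      rw [mul_neg, mul_inv_cancel₀ (hpos u hu).ne']
    rw [hGdef]
    refine h2.congr_deriv ?_
    rw [this]; ring
  have hFcont : ContinuousOn F (Set.Ioi 0) := fun u hu =>
    (hFderiv u hu).continuousAt.continuousWithinAt
  have hG'cont : ContinuousOn (fun s => deriv f s * F s - 1) (Set.Ioi 0) :=
    (((hf.continuous_deriv le_rfl).continuousOn).mul hFcont).sub continuousOn_const
  -- FTC for G
  have hFTC : ∀ a b : ℝ, 0 < a → a ≤ b →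
      ∫ s in a..b, (deriv f s * F s - 1) = G b - G a := by
    intro a b ha hab
    refine intervalIntegral.integral_eq_sub_of_hasDerivAt ?_ ?_
    · intro x hx
      rw [Set.uIcc_of_le hab] at hx
      exact hGderiv x (ha.trans_le hx.1)
    · apply ContinuousOn.intervalIntegrable
      apply hG'cont.mono
      rw [Set.uIcc_of_le hab]
      intro x hx; exact ha.trans_le hx.1
  have hG'ii : ∀ a b : ℝ, 0 < a → a ≤ b →
      IntervalIntegrable (fun s => deriv f s * F s - 1) volume a b := by
    intro a b ha hab
    apply ContinuousOn.intervalIntegrable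
    apply hG'cont.mono
    rw [Set.uIcc_of_le hab]
    intro x hx; exact ha.trans_le hx.1
  by_contra hA1
  rcases lt_or_gt_of_ne hA1 with hlt | hgt
  · -- case A < 1 : G decreases linearly, contradicting positivity
    set ε : ℝ := (1 - A)/2 with hεdef
    have hε : 0 < ε := by rw [hεdef]; linarith
    obtain ⟨u₀, hu₀⟩ := eventually_atTop.1
      (hA.eventually (gt_mem_nhds (show A < A + ε by linarith)))
    set u₁ : ℝ := max u₀ 1 with hu₁def
    have hu₁pos : (0:ℝ) < u₁ := lt_of_lt_of_le one_pos (le_max_right _ _)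
    set b : ℝ := u₁ + (G u₁ + 1)/ε with hbdef
    have hbge : u₁ ≤ b := by
      rw [hbdef]
      have : 0 ≤ (G u₁ + 1)/ε :=
        div_nonneg (by linarith [hGpos u₁ hu₁pos]) hε.le
      linarith
    have hbpos : 0 < b := lt_of_lt_of_le hu₁pos hbge
    have key : ∫ s in u₁..b, (deriv f s * F s - 1) ≤
        ∫ s in u₁..b, (A + ε - 1) := by
      apply intervalIntegral.integral_mono_on hbge (hG'ii u₁ b hu₁pos hbge)
        intervalIntegrable_const
      intro x hx
      have hx1 : u₀ ≤ x := le_trans (le_max_left _ _) hx.1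
      have := hu₀ x hx1
      linarith
    rw [hFTC u₁ b hu₁pos hbge, intervalIntegral.integral_const] at key
    have hεe : A + ε - 1 = -ε := by rw [hεdef]; ring
    rw [hεe, smul_eq_mul] at key
    have hbu : b - u₁ = (G u₁ + 1)/ε := by rw [hbdef]; ring
    rw [hbu] at key
    have : (G u₁ + 1)/ε * ε = G u₁ + 1 := div_mul_cancel₀ _ hε.ne'
    have hGb : G b ≤ -1 := by nlinarith
    linarith [hGpos b hbpos]
  · -- case A > 1
    set c : ℝ := (A - 1)/2 with hcdef
    have hc : 0 < c := by rw [hcdef]; linarith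
    obtain ⟨u₀, hu₀⟩ := eventually_atTop.1
      (hA.eventually (Metric.ball_mem_nhds A hc))
    set u₁ : ℝ := max u₀ 1 with hu₁def
    have hu₁pos : (0:ℝ) < u₁ := lt_of_lt_of_le one_pos (le_max_right _ _)
    have hband : ∀ x, u₁ ≤ x → c ≤ deriv f x * F x - 1 ∧
        deriv f x * F x - 1 ≤ 3*c := by
      intro x hx
      have := hu₀ x (le_trans (le_max_left _ _) hx)
      rw [Real.dist_eq, abs_sub_lt_iff] at this
      have hFx : (∫ s in Set.Ioi x, (f s)⁻¹) = F x := rfl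
      rw [hFx] at this
      constructor
      · nlinarith [this.1, this.2]
      · nlinarith [this.1, this.2]
    -- growth bounds for G
    have hGlow : ∀ b, u₁ ≤ b → G u₁ + c * (b - u₁) ≤ G b := by
      intro b hb
      have key : ∫ s in u₁..b, (c : ℝ) ≤
          ∫ s in u₁..b, (deriv f s * F s - 1) := by
        apply intervalIntegral.integral_mono_on hb intervalIntegrable_const
          (hG'ii u₁ b hu₁pos hb)
        intro x hx; exact (hband x hx.1).1
      rw [hFTC u₁ b hu₁pos hb, intervalIntegral.integral_const, smul_eq_mul] at key
      nlinarith
    have hGhigh : ∀ b, u₁ ≤ b → G b ≤ G u₁ + 3*c * (b - u₁) := by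
      intro b hb
      have key : ∫ s in u₁..b, (deriv f s * F s - 1) ≤
          ∫ s in u₁..b, (3*c : ℝ) := by
        apply intervalIntegral.integral_mono_on hb (hG'ii u₁ b hu₁pos hb)
          intervalIntegrable_const
        intro x hx; exact (hband x hx.1).2
      rw [hFTC u₁ b hu₁pos hb, intervalIntegral.integral_const, smul_eq_mul] at key
      nlinarith
    set u₂ : ℝ := 2 * u₁ with hu₂def
    have hu₂pos : 0 < u₂ := by rw [hu₂def]; linarith
    have hu₁₂ : u₁ ≤ u₂ := by rw [hu₂def]; linarith
    have hGlow2 : ∀ u, u₂ ≤ u → c/2 * u ≤ G u := by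
      intro u hu
      have h1 := hGlow u (hu₁₂.trans hu)
      have hG1 := hGpos u₁ hu₁pos
      have : 2 * u₁ ≤ u := by rw [← hu₂def]; exact hu
      nlinarith
    set C : ℝ := G u₁ + 3*c with hCdef
    have hC : 0 < C := by
      rw [hCdef]; have := hGpos u₁ hu₁pos; linarith
    have hGhigh2 : ∀ u, u₂ ≤ u → G u ≤ C * u := by
      intro u hu
      have h1 := hGhigh u (hu₁₂.trans hu)
      have hu1 : 1 ≤ u := le_trans (le_trans (le_max_right _ _) hu₁₂) hu
      have hG1 := hGpos u₁ hu₁pos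
      rw [hCdef]
      nlinarith
    -- choose n with n * (c/2) ≥ 1
    set n : ℕ := ⌈2/c⌉₊ + 1 with hndef
    have hn : 2/c ≤ (n:ℝ) := by
      rw [hndef]
      push_cast
      linarith [Nat.le_ceil (2/c)]
    have hnc : ∀ u, 0 < u → u₂ ≤ u → u ≤ (n:ℝ) * G u := by
      intro u hu0 hu
      have h1 := hGlow2 u hu
      have hnpos : (0:ℝ) < n := by positivity
      have : 2/c * (c/2 * u) ≤ (n:ℝ) * G u := by
        apply mul_le_mul hn h1 (by positivity) hnpos.le
      calc u = 2/c * (c/2 * u) := by field_simp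
        _ ≤ (n:ℝ) * G u := this
    -- P = F * u^n is nondecreasing on [u₂, ∞)
    have hPderiv : ∀ u > (0:ℝ), HasDerivAt (fun x => F x * x^n)
        (-(f u)⁻¹ * u^n + F u * ((n:ℝ) * u^(n-1))) u :=
      fun u hu => (hFderiv u hu).mul (hasDerivAt_pow n u)
    have hP'nonneg : ∀ u, u₂ ≤ u →
        0 ≤ -(f u)⁻¹ * u^n + F u * ((n:ℝ) * u^(n-1)) := by
      intro u hu
      have hu0 : 0 < u := lt_of_lt_of_le hu₂pos hu
      have hfu := hpos u hu0
      have h1 := hnc u hu0 hu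
      -- u ≤ n * f u * F u
      have h2 : (f u)⁻¹ * u ≤ (n:ℝ) * F u := by
        rw [inv_mul_le_iff₀ hfu]
        rw [hGdef] at h1
        calc u ≤ (n:ℝ) * (f u * F u) := h1
          _ = f u * ((n:ℝ) * F u) := by ring
      have hpow : (0:ℝ) ≤ u^(n-1) := by positivity
      have hun : u^n = u * u^(n-1) := by
        conv_lhs => rw [show n = 1 + (n-1) by omega]
        rw [pow_add, pow_one]
      rw [hun]
      nlinarith
    have hP'cont : ContinuousOn
        (fun u => -(f u)⁻¹ * u^n + F u * ((n:ℝ) * u^(n-1))) (Set.Ioi 0) := by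
      apply ContinuousOn.add
      · exact (ContinuousOn.neg (fun u hu => (hinvc u hu).continuousWithinAt)).mul
          (continuous_pow n).continuousOn
      · exact hFcont.mul (continuousOn_const.mul (continuous_pow (n-1)).continuousOn)
    have hPmono : ∀ b, u₂ ≤ b → F u₂ * u₂^n ≤ F b * b^n := by
      intro b hb
      have heq : ∫ s in u₂..b, (-(f s)⁻¹ * s^n + F s * ((n:ℝ) * s^(n-1)))
          = F b * b^n - F u₂ * u₂^n := by
        refine intervalIntegral.integral_eq_sub_of_hasDerivAt
          (f := fun x => F x * x^n) ?_ ?_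
        · intro x hx
          rw [Set.uIcc_of_le hb] at hx
          exact hPderiv x (lt_of_lt_of_le hu₂pos hx.1)
        · apply ContinuousOn.intervalIntegrable
          apply hP'cont.mono
          rw [Set.uIcc_of_le hb]
          intro x hx; exact lt_of_lt_of_le hu₂pos hx.1
      have hnn : 0 ≤ ∫ s in u₂..b, (-(f s)⁻¹ * s^n + F s * ((n:ℝ) * s^(n-1))) := by
        apply intervalIntegral.integral_nonneg hb
        intro x hx; exact hP'nonneg x hx.1
      linarith [heq ▸ hnn]
    set K : ℝ := F u₂ * u₂^n with hKdef
    have hK : 0 < K := by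
      rw [hKdef]; exact mul_pos (hFpos u₂ hu₂pos) (by positivity)
    -- final contradiction with superpolynomial growth
    set k : ℝ := (n:ℝ) + 2 with hkdef
    have hk : 0 < k := by rw [hkdef]; positivity
    obtain ⟨u, hu1, hu2, hu3⟩ := (((hsuper k hk).eventually_gt_atTop (C/K)).and
      ((eventually_ge_atTop u₂).and (eventually_ge_atTop 1))).exists
    have hu0 : (0:ℝ) < u := lt_of_lt_of_le one_pos hu3
    -- f u * K ≤ C * u^(n+1)
    have hfK : f u * K ≤ C * u^(n+1) := by
      have h1 := hPmono u hu2
      have h2 := hGhigh2 u hu2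
      rw [hGdef] at h2
      have hFu := hFpos u hu0
      have hfu := hpos u hu0
      calc f u * K ≤ f u * (F u * u^n) := by
            apply mul_le_mul_of_nonneg_left h1 hfu.le
        _ = (f u * F u) * u^n := by ring
        _ ≤ (C * u) * u^n := by
            apply mul_le_mul_of_nonneg_right h2 (by positivity)
        _ = C * u^(n+1) := by ring
    -- but u^(-k) * f u > C/K
    have hrw : u ^ (-k) = (u^(n+2))⁻¹ := by
      rw [hkdef, Real.rpow_neg hu0.le]
      congr 1
      rw [show ((n:ℝ) + 2) = ((n+2 : ℕ) : ℝ) by push_cast; ring,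
        Real.rpow_natCast]
    rw [hrw] at hu1
    have hub : (u^(n+2))⁻¹ * f u ≤ C/K := by
      rw [inv_mul_le_iff₀ (by positivity : (0:ℝ) < u^(n+2))]
      have hpowle : u^(n+1) ≤ u^(n+2) := pow_le_pow_right₀ hu3 (by omega)
      have h3 : f u * K ≤ C * u^(n+2) := le_trans hfK
        (mul_le_mul_of_nonneg_left hpowle hC.le)
      calc f u = f u * K / K := by field_simp
        _ ≤ C * u^(n+2) / K := by gcongr
        _ = u^(n+2) * (C/K) := by ring
    linarith
end

section
/- Let f satisfy: f is C¹ and positive, convex on (0,∞), (log f)' is regularly varying of index ρ−1 with ρ ∈ (0,∞), and f'(u)F(u) → 1 as u → ∞, where F(u) = ∫_u^∞ ds/f(s). Then the product fF, i.e., u ↦ f(u)F(u), is regularly varying at infinity of index 1−ρ. -/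
open Filter MeasureTheory

/-- If `f` is `C¹`, positive and convex on `(0,∞)`, `(log f)'` is regularly
varying of index `ρ − 1` with `ρ ∈ (0,∞)`, and `f'(u)F(u) → 1` where
`F(u) = ∫_u^∞ ds/f(s)`, then `fF` is regularly varying at infinity of index
`1 − ρ`. -/
theorem fF_regularly_varying (f : ℝ → ℝ) (hf : ContDiff ℝ 1 f)
    (hpos : ∀ x > (0 : ℝ), 0 < f x) (hconv : ConvexOn ℝ (Set.Ioi 0) f)
    (hint : ∀ u > (0 : ℝ), IntegrableOn (fun s => (f s)⁻¹) (Set.Ioi u))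
    (ρ : ℝ) (hρ : 0 < ρ)
    (hrv : ∀ l : ℝ, 0 < l → Tendsto
      (fun u => deriv (fun x => Real.log (f x)) (l * u) /
        deriv (fun x => Real.log (f x)) u)
      atTop (nhds (l ^ (ρ - 1))))
    (hfF : Tendsto (fun u => deriv f u * ∫ s in Set.Ioi u, (f s)⁻¹)
      atTop (nhds 1)) :
    ∀ l : ℝ, 0 < l → Tendsto
      (fun u => (f (l * u) * ∫ s in Set.Ioi (l * u), (f s)⁻¹) /
        (f u * ∫ s in Set.Ioi u, (f s)⁻¹))
      atTop (nhds (l ^ (1 - ρ))) := by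
  intro l hl
  set g : ℝ → ℝ := deriv (fun x => Real.log (f x)) with hgdef
  have hdf : Differentiable ℝ f := hf.differentiable one_ne_zero
  have hgd : ∀ x > (0 : ℝ), g x = deriv f x / f x := by
    intro x hx
    have : HasDerivAt (fun y => Real.log (f y)) (deriv f x / f x) x :=
      ((hdf x).hasDerivAt).log (hpos x hx).ne'
    exact this.deriv
  -- g is eventually nonzero
  have hgne : ∀ᶠ u in atTop, g u ≠ 0 := by
    have h1 : Tendsto (fun u => g (1 * u) / g u) atTop (nhds ((1 : ℝ) ^ (ρ - 1))) :=
      hrv 1 one_pos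
    have h1' := h1.eventually_ne (by rw [Real.one_rpow]; exact one_ne_zero)
    filter_upwards [h1'] with u hu h0
    exact hu (by simp [h0])
  have hl' : Tendsto (fun u : ℝ => l * u) atTop atTop :=
    Tendsto.const_mul_atTop hl tendsto_id
  have hglne : ∀ᶠ u in atTop, g (l * u) ≠ 0 := hl'.eventually hgne
  have hAl : Tendsto (fun u => deriv f (l * u) * ∫ s in Set.Ioi (l * u), (f s)⁻¹)
      atTop (nhds 1) := hfF.comp hl'
  have hlim : Tendsto
      (fun u => (deriv f (l * u) * ∫ s in Set.Ioi (l * u), (f s)⁻¹) /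
        (deriv f u * ∫ s in Set.Ioi u, (f s)⁻¹) * (g (l * u) / g u)⁻¹)
      atTop (nhds (1 / 1 * (l ^ (ρ - 1))⁻¹)) :=
    (hAl.div hfF one_ne_zero).mul
      ((hrv l hl).inv₀ (Real.rpow_pos_of_pos hl _).ne')
  have hval : 1 / 1 * ((l : ℝ) ^ (ρ - 1))⁻¹ = l ^ (1 - ρ) := by
    rw [div_one, one_mul, ← Real.rpow_neg hl.le, neg_sub]
  rw [hval] at hlim
  refine Tendsto.congr' ?_ hlim
  filter_upwards [eventually_gt_atTop 0, hgne, hglne] with u hu hgu hglu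
  have hul : 0 < l * u := mul_pos hl hu
  have hfu : f u ≠ 0 := (hpos u hu).ne'
  have hflu : f (l * u) ≠ 0 := (hpos _ hul).ne'
  have hdu : deriv f u ≠ 0 := by
    intro h; exact hgu (by rw [hgd u hu, h, zero_div])
  have hdlu : deriv f (l * u) ≠ 0 := by
    intro h; exact hglu (by rw [hgd _ hul, h, zero_div])
  rw [hgd u hu, hgd _ hul, inv_div]
  have hne : deriv f u * deriv f (l * u) ≠ 0 := mul_ne_zero hdu hdlu
  rw [eq_comm, ← mul_div_mul_right _ _ hne]
  field_simp
end

section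
/- Let q : (0,∞) → (0,∞) be continuous. Then there exists a function p : (0,∞) → (0,∞) such that: (i) 0 < p(x) ≤ q(x) for all x > 0; (ii) p(x) → 0 as x → ∞; (iii) p is rapidly varying of index −∞, i.e., for every λ > 1, p(λx)/p(x) → 0 as x → ∞. -/
open Filter

/-- For every continuous `q : (0,∞) → (0,∞)` there exists `p : (0,∞) → (0,∞)`
with `0 < p ≤ q` on `(0,∞)`, `p(x) → 0` as `x → ∞`, and `p` rapidly varying of
index `−∞`: `p(λx)/p(x) → 0` as `x → ∞` for every `λ > 1`. -/
theorem exists_rapidly_varying_minorant (q : ℝ → ℝ)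
    (hq : ContinuousOn q (Set.Ioi 0)) (hqpos : ∀ x > (0 : ℝ), 0 < q x) :
    ∃ p : ℝ → ℝ,
      (∀ x > (0 : ℝ), 0 < p x ∧ p x ≤ q x) ∧
      Tendsto p atTop (nhds 0) ∧
      (∀ l : ℝ, 1 < l → Tendsto (fun x => p (l * x) / p x) atTop (nhds 0)) := by
  set f : ℝ → ℝ := fun y => -Real.log (q y) with hfdef
  have hfc : ContinuousOn f (Set.Ioi 0) :=
    (hq.log (fun x hx => (hqpos x hx).ne')).neg
  set φ : ℝ → ℝ := fun x => sSup (f '' Set.Icc 1 x) with hφdef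
  have hsub : ∀ x : ℝ, Set.Icc (1:ℝ) x ⊆ Set.Ioi 0 := fun x y hy =>
    lt_of_lt_of_le one_pos hy.1
  have hbdd : ∀ x : ℝ, BddAbove (f '' Set.Icc 1 x) := fun x =>
    (isCompact_Icc.image_of_continuousOn (hfc.mono (hsub x))).bddAbove
  have hmem : ∀ x : ℝ, 1 ≤ x → f x ≤ φ x := fun x hx =>
    le_csSup (hbdd x) ⟨x, ⟨hx, le_rfl⟩, rfl⟩
  have hmono : ∀ x y : ℝ, 1 ≤ x → x ≤ y → φ x ≤ φ y := fun x y hx hxy =>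
    csSup_le_csSup (hbdd y) ((Set.nonempty_Icc.mpr hx).image f)
      (Set.image_mono (Set.Icc_subset_Icc_right hxy))
  refine ⟨fun x => min (q x) (Real.exp (-(φ (max x 1)) - max x 1)), ?_, ?_, ?_⟩
  · intro x hx
    exact ⟨lt_min (hqpos x hx) (Real.exp_pos _), min_le_left _ _⟩
  · -- eventually p x = exp(-φ x - x) ≤ exp(-φ 1 - x)
    have key : ∀ x : ℝ, 1 ≤ x →
        min (q x) (Real.exp (-(φ (max x 1)) - max x 1)) = Real.exp (-(φ x) - x) := by
      intro x hx
      rw [max_eq_left hx]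
      refine min_eq_right ?_
      have h1 : Real.exp (-(φ x) - x) ≤ Real.exp (-(f x)) := by
        apply Real.exp_le_exp.mpr
        have := hmem x hx
        linarith
      have h2 : Real.exp (-(f x)) = q x := by
        simp only [hfdef, neg_neg]
        exact Real.exp_log (hqpos x (lt_of_lt_of_le one_pos hx))
      linarith
    have hub : Tendsto (fun x : ℝ => Real.exp (-(φ 1) - x)) atTop (nhds 0) := by
      apply Real.tendsto_exp_atBot.comp
      apply tendsto_atBot_add_const_left
      exact tendsto_neg_atTop_atBot
    refine tendsto_of_tendsto_of_tendsto_of_le_of_le' tendsto_const_nhds hub ?_ ?_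
    · filter_upwards [eventually_ge_atTop (1:ℝ)] with x hx
      exact le_of_lt (lt_min (hqpos x (lt_of_lt_of_le one_pos hx)) (Real.exp_pos _))
    · filter_upwards [eventually_ge_atTop (1:ℝ)] with x hx
      rw [key x hx]
      apply Real.exp_le_exp.mpr
      have := hmono 1 x le_rfl hx
      linarith
  · intro l hl
    have key : ∀ x : ℝ, 1 ≤ x →
        min (q x) (Real.exp (-(φ (max x 1)) - max x 1)) = Real.exp (-(φ x) - x) := by
      intro x hx
      rw [max_eq_left hx]
      refine min_eq_right ?_
      have h1 : Real.exp (-(φ x) - x) ≤ Real.exp (-(f x)) := by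
        apply Real.exp_le_exp.mpr
        have := hmem x hx
        linarith
      have h2 : Real.exp (-(f x)) = q x := by
        simp only [hfdef, neg_neg]
        exact Real.exp_log (hqpos x (lt_of_lt_of_le one_pos hx))
      linarith
    have hub : Tendsto (fun x : ℝ => Real.exp (x - l * x)) atTop (nhds 0) := by
      apply Real.tendsto_exp_atBot.comp
      have : ∀ x : ℝ, x - l * x = (1 - l) * x := by intro x; ring
      simp only [this]
      exact tendsto_id.const_mul_atTop_of_neg (by linarith)
    refine tendsto_of_tendsto_of_tendsto_of_le_of_le' tendsto_const_nhds hub ?_ ?_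
    · filter_upwards [eventually_ge_atTop (1:ℝ)] with x hx
      have h0 : (0:ℝ) < x := lt_of_lt_of_le one_pos hx
      have hlx : (0:ℝ) < l * x := mul_pos (lt_trans one_pos hl) h0
      exact le_of_lt (div_pos (lt_min (hqpos _ hlx) (Real.exp_pos _))
        (lt_min (hqpos _ h0) (Real.exp_pos _)))
    · filter_upwards [eventually_ge_atTop (1:ℝ)] with x hx
      have hxlx : x ≤ l * x := by nlinarith
      have hlx1 : (1:ℝ) ≤ l * x := le_trans hx hxlx
      rw [key x hx, key (l * x) hlx1, ← Real.exp_sub]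
      apply Real.exp_le_exp.mpr
      have := hmono x (l * x) hx hxlx
      linarith
end

section
/- Let r : [0,∞) → [0,∞) be C² with r'' > 0 on (0,∞), r(0)=0, r'(0)=1 and r'(x) → ∞ as x → ∞. Then there exists J : [0,∞) → [0,∞) such that: J(0) > 0; J ∈ C¹ is increasing and convex; (J')²/(J''·J) → 1 at infinity; (log J)' is rapidly varying of index ∞ (i.e., (log J)'(λx)/(log J)'(x) → ∞ for every λ > 1); and J(x) ≥ exp(r(x)) for all x ≥ 0. -/
open Filter MeasureTheory Set Real

noncomputable def pp (m : ℝ → ℝ) (x : ℝ) : ℝ := Real.exp (-x^2) / m x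

noncomputable def QQ (m : ℝ → ℝ) (x : ℝ) : ℝ := ∫ t in Set.Ioi x, pp m t

section
variable {m : ℝ → ℝ}

lemma m_pos (hm1 : ∀ x, 1 ≤ m x) (x : ℝ) : 0 < m x := lt_of_lt_of_le one_pos (hm1 x)

lemma pp_pos (hm1 : ∀ x, 1 ≤ m x) (x : ℝ) : 0 < pp m x := div_pos (Real.exp_pos _) (m_pos hm1 x)

lemma pp_le (hm1 : ∀ x, 1 ≤ m x) (x : ℝ) : pp m x ≤ Real.exp (-x^2) :=
  div_le_self (Real.exp_pos _).le (hm1 x)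

lemma pp_cont (hmc : Continuous m) (hm1 : ∀ x, 1 ≤ m x) : Continuous (pp m) := by
  apply Continuous.div
  · exact Real.continuous_exp.comp (continuous_pow 2).neg
  · exact hmc
  · exact fun x => (m_pos hm1 x).ne'

lemma pp_integrable (hmc : Continuous m) (hm1 : ∀ x, 1 ≤ m x) : Integrable (pp m) := by
  have h1 : Integrable (fun x : ℝ => Real.exp (-1*x^2)) := integrable_exp_neg_mul_sq one_pos
  refine h1.mono (pp_cont hmc hm1).aestronglyMeasurable (ae_of_all _ fun x => ?_)
  rw [Real.norm_eq_abs, Real.norm_eq_abs, abs_of_pos (pp_pos hm1 x),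
    abs_of_pos (Real.exp_pos _)]
  simpa using pp_le hm1 x

lemma pp_anti (hmm : Monotone m) (hm1 : ∀ x, 1 ≤ m x) {x y : ℝ} (hx : 0 ≤ x) (hxy : x ≤ y) :
    pp m y ≤ pp m x := by
  apply div_le_div₀ (Real.exp_pos _).le _ (m_pos hm1 x) (hmm hxy)
  apply Real.exp_le_exp.2
  nlinarith

lemma QQ_pos (hmc : Continuous m) (hm1 : ∀ x, 1 ≤ m x) (x : ℝ) : 0 < QQ m x := by
  rw [QQ, setIntegral_pos_iff_support_of_nonneg_ae
    (ae_of_all _ fun t => (pp_pos hm1 t).le) (pp_integrable hmc hm1).integrableOn]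
  have : Function.support (pp m) = Set.univ := by
    ext t; simp [Function.mem_support, (pp_pos hm1 t).ne']
  rw [this, Set.univ_inter]
  exact MeasureTheory.Measure.measure_Ioi_pos _ x

lemma QQ_split (hmc : Continuous m) (hm1 : ∀ x, 1 ≤ m x) {a b : ℝ} (hab : a ≤ b) :
    QQ m a = (∫ t in Set.Ioc a b, pp m t) + QQ m b := by
  rw [QQ, QQ, ← Set.Ioc_union_Ioi_eq_Ioi hab,
    setIntegral_union (Set.Ioc_disjoint_Ioi le_rfl) measurableSet_Ioi
      (pp_integrable hmc hm1).integrableOn (pp_integrable hmc hm1).integrableOn]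

lemma QQ_eq (hmc : Continuous m) (hm1 : ∀ x, 1 ≤ m x) (x : ℝ) :
    QQ m x = QQ m 0 - ∫ t in (0:ℝ)..x, pp m t := by
  rcases le_total 0 x with h | h
  · rw [intervalIntegral.integral_of_le h]
    have := QQ_split hmc hm1 h
    linarith
  · rw [intervalIntegral.integral_of_ge h]
    have := QQ_split hmc hm1 h
    linarith

lemma QQ_hasDeriv (hmc : Continuous m) (hm1 : ∀ x, 1 ≤ m x) (x : ℝ) :
    HasDerivAt (QQ m) (-(pp m x)) x := by
  have h := (((pp_cont hmc hm1).integral_hasStrictDerivAt 0 x).hasDerivAt).const_sub (QQ m 0)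
  have he : (fun y => QQ m 0 - ∫ t in (0:ℝ)..y, pp m t) = QQ m :=
    funext fun y => (QQ_eq hmc hm1 y).symm
  rwa [he] at h

lemma exp_sq_integrable : Integrable (fun t : ℝ => Real.exp (-t^2)) := by
  have h := integrable_exp_neg_mul_sq (one_pos (α := ℝ))
  have : (fun t : ℝ => Real.exp (-1 * t^2)) = fun t : ℝ => Real.exp (-t^2) := by
    funext t; norm_num
  rwa [this] at h

lemma gauss_int : (∫ t in Set.Ioi (0:ℝ), Real.exp (-t^2)) ≤ 2 := by
  have h := integral_gaussian_Ioi 1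
  have heq : (fun t : ℝ => Real.exp (-1 * t^2)) = fun t : ℝ => Real.exp (-t^2) := by
    funext t; norm_num
  rw [heq] at h
  rw [h]
  have h2 : Real.sqrt (π / 1) ≤ 2 := by
    rw [div_one]
    nlinarith [Real.sq_sqrt Real.pi_pos.le, Real.sqrt_nonneg π, Real.pi_le_four]
  linarith

lemma exp_neg_int (x : ℝ) : IntegrableOn (fun t : ℝ => Real.exp (-t)) (Set.Ioi x) := by
  have h := exp_neg_integrableOn_Ioi x (one_pos (α := ℝ))
  have : (fun t : ℝ => Real.exp (-1 * t)) = fun t : ℝ => Real.exp (-t) := by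
    funext t; norm_num
  rwa [this] at h

section
variable {m : ℝ → ℝ}

lemma QQ_le (hmc : Continuous m) (hmm : Monotone m) (hm1 : ∀ x, 1 ≤ m x) {x : ℝ}
    (hx : 0 ≤ x) : QQ m x ≤ 2 / m x := by
  have h1 : QQ m x ≤ ∫ t in Set.Ioi x, Real.exp (-t^2) / m x := by
    apply setIntegral_mono_on (pp_integrable hmc hm1).integrableOn
      (exp_sq_integrable.div_const _).integrableOn measurableSet_Ioi
    intro t ht
    exact div_le_div_of_nonneg_left (Real.exp_pos _).le (m_pos hm1 x) (hmm (le_of_lt ht))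
  have h2 : (∫ t in Set.Ioi x, Real.exp (-t^2) / m x)
      = (∫ t in Set.Ioi x, Real.exp (-t^2)) / m x := integral_div _ _
  have h3 : (∫ t in Set.Ioi x, Real.exp (-t^2)) ≤ ∫ t in Set.Ioi (0:ℝ), Real.exp (-t^2) := by
    apply setIntegral_mono_set exp_sq_integrable.integrableOn
      (ae_of_all _ fun t => (Real.exp_pos _).le)
    exact HasSubset.Subset.eventuallyLE (Set.Ioi_subset_Ioi hx)
  rw [h2] at h1
  exact h1.trans ((div_le_div_iff_of_pos_right (m_pos hm1 x)).2 (h3.trans gauss_int))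

lemma QQ_tail (hmc : Continuous m) (hmm : Monotone m) (hm1 : ∀ x, 1 ≤ m x) {x : ℝ}
    (hx : 1 ≤ x) : QQ m x ≤ Real.exp (-x^2) / m x := by
  have hint : IntegrableOn (fun t : ℝ => Real.exp (-x^2+x) / m x * Real.exp (-t))
      (Set.Ioi x) := (exp_neg_int x).const_mul _
  have h1 : QQ m x ≤ ∫ t in Set.Ioi x, Real.exp (-x^2+x) / m x * Real.exp (-t) := by
    apply setIntegral_mono_on (pp_integrable hmc hm1).integrableOn hint measurableSet_Ioi
    intro t ht
    have htx : x ≤ t := le_of_lt ht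
    have hb : Real.exp (-t^2) ≤ Real.exp (-x^2+x) * Real.exp (-t) := by
      rw [← Real.exp_add]
      apply Real.exp_le_exp.2
      nlinarith
    calc pp m t = Real.exp (-t^2) / m t := rfl
      _ ≤ Real.exp (-t^2) / m x :=
        div_le_div_of_nonneg_left (Real.exp_pos _).le (m_pos hm1 x) (hmm htx)
      _ ≤ Real.exp (-x^2+x) * Real.exp (-t) / m x := (div_le_div_iff_of_pos_right (m_pos hm1 x)).2 hb
      _ = Real.exp (-x^2+x) / m x * Real.exp (-t) := by ring
  have h2 : (∫ t in Set.Ioi x, Real.exp (-x^2+x) / m x * Real.exp (-t))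
      = Real.exp (-x^2+x) / m x * Real.exp (-x) := by
    rw [integral_const_mul, integral_exp_neg_Ioi]
  calc QQ m x ≤ Real.exp (-x^2+x) / m x * Real.exp (-x) := h1.trans_eq h2
    _ = Real.exp (-x^2) / m x := by
        rw [div_mul_eq_mul_div, ← Real.exp_add]
        ring_nf

lemma QQ_lower (hmc : Continuous m) (hmm : Monotone m) (hm1 : ∀ x, 1 ≤ m x) {x : ℝ}
    (hx : 0 ≤ x) : pp m (x+1) ≤ QQ m x := by
  have hsplit := QQ_split hmc hm1 (show x ≤ x + 1 by linarith)
  have h1 : pp m (x+1) ≤ ∫ t in Set.Ioc x (x+1), pp m t := by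
    have hc : (∫ _ in Set.Ioc x (x+1), pp m (x+1)) = pp m (x+1) := by
      rw [setIntegral_const, Real.volume_real_Ioc]
      simp
    rw [← hc]
    apply setIntegral_mono_on ?_ (pp_integrable hmc hm1).integrableOn measurableSet_Ioc
    · intro t ht
      exact pp_anti hmm hm1 (lt_of_le_of_lt hx ht.1).le ht.2
    · exact integrableOn_const (by rw [Real.volume_Ioc]; simp)
  have := (QQ_pos hmc hm1 (x+1)).le
  linarith
end

/-- Given any `C²` function `r : [0,∞) → [0,∞)` with `r'' > 0` on `(0,∞)`,
`r(0) = 0`, `r'(0) = 1` and `r'(x) → ∞`, there exists `J : [0,∞) → [0,∞)`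
with `J(0) > 0`, `J` `C¹`, increasing and convex on `[0,∞)`,
`(J')²/(J''·J) → 1` at infinity, `(log J)' = J'/J` rapidly varying of index
`∞`, and `J(x) ≥ exp(r(x))` for all `x ≥ 0`. -/
theorem exists_rapidly_growing_J (r : ℝ → ℝ)
    (hr : ContDiffOn ℝ 2 r (Set.Ici 0))
    (hr'' : ∀ x > (0 : ℝ), 0 < deriv (deriv r) x)
    (hr0 : r 0 = 0) (hr'0 : deriv r 0 = 1)
    (hnonneg : ∀ x ≥ (0 : ℝ), 0 ≤ r x)
    (hrtop : Tendsto (deriv r) atTop atTop) :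
    ∃ J : ℝ → ℝ,
      0 < J 0 ∧ (∀ x ≥ (0 : ℝ), 0 ≤ J x) ∧
      ContDiffOn ℝ 1 J (Set.Ici 0) ∧
      MonotoneOn J (Set.Ici 0) ∧
      ConvexOn ℝ (Set.Ici 0) J ∧
      Tendsto (fun x => (deriv J x) ^ 2 / (deriv (deriv J) x * J x))
        atTop (nhds 1) ∧
      (∀ l : ℝ, 1 < l →
        Tendsto (fun x => (deriv J (l * x) / J (l * x)) / (deriv J x / J x))
          atTop atTop) ∧
      ∀ x ≥ (0 : ℝ), Real.exp (r x) ≤ J x := by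
  -- basic facts about r
  have hdiff0 : DifferentiableAt ℝ r 0 := by
    by_contra h
    rw [deriv_zero_of_not_differentiableAt h] at hr'0
    norm_num at hr'0
  have hdiffpos : ∀ x : ℝ, 0 < x → DifferentiableAt ℝ r x := fun x hx =>
    (hr.differentiableOn (by norm_num)).differentiableAt (Ici_mem_nhds hx)
  have hrd : ∀ t ∈ Set.Ici (0:ℝ), HasDerivAt r (deriv r t) t := by
    intro t ht
    rcases eq_or_lt_of_le (mem_Ici.1 ht) with h | h
    · exact (h ▸ hdiff0).hasDerivAt
    · exact (hdiffpos t h).hasDerivAt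
  have hr'cont : ContinuousOn (deriv r) (Set.Ici 0) := by
    have h1 := hr.continuousOn_derivWithin (uniqueDiffOn_Ici 0) (by norm_num)
    apply h1.congr
    intro x hx
    rcases eq_or_lt_of_le (mem_Ici.1 hx) with h | h
    · exact ((h ▸ hdiff0).derivWithin ((uniqueDiffOn_Ici 0) _ (h ▸ hx))).symm
    · exact (derivWithin_of_mem_nhds (Ici_mem_nhds h)).symm
  have hr'mono : StrictMonoOn (deriv r) (Set.Ici 0) := by
    apply strictMonoOn_of_deriv_pos (convex_Ici 0) hr'cont
    rwa [interior_Ici]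
  have hr'ge1 : ∀ t : ℝ, 0 ≤ t → 1 ≤ deriv r t := by
    intro t ht
    rcases eq_or_lt_of_le ht with h | h
    · rw [← h, hr'0]
    · rw [← hr'0]
      exact (hr'mono self_mem_Ici (le_of_lt h) h).le
  -- the weight function M
  set M : ℝ → ℝ := fun t => 2*(1 + deriv r (max t 0 + 1)) with hMdef
  have hm1 : ∀ x, 1 ≤ M x := by
    intro x
    have := hr'ge1 (max x 0 + 1) (by positivity)
    simp only [hMdef]
    nlinarith
  have hmc : Continuous M := by
    apply (continuous_const.mul (continuous_const.add ?_))
    apply hr'cont.comp_continuous ((continuous_id.max continuous_const).add continuous_const)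
    intro x
    simp only [mem_Ici]
    show (0:ℝ) ≤ max x 0 + 1
    linarith [le_max_right x 0]
  have hmm : Monotone M := by
    intro a b hab
    simp only [hMdef]
    have h1 : max a 0 + 1 ≤ max b 0 + 1 := by
      have := max_le_max hab (le_refl (0:ℝ)); linarith
    have h2 := hr'mono.monotoneOn (mem_Ici.2 (by positivity : (0:ℝ) ≤ max a 0 + 1))
      (mem_Ici.2 (by positivity : (0:ℝ) ≤ max b 0 + 1)) h1
    linarith
  -- g, F, J
  set g : ℝ → ℝ := fun x => (QQ M x)⁻¹ with hgdef
  have hQc : Continuous (QQ M) :=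
    continuous_iff_continuousAt.2 fun x => (QQ_hasDeriv hmc hm1 x).continuousAt
  have hgc : Continuous g := hQc.inv₀ fun x => (QQ_pos hmc hm1 x).ne'
  have hgpos : ∀ x, 0 < g x := fun x => inv_pos.2 (QQ_pos hmc hm1 x)
  set F : ℝ → ℝ := fun x => ∫ t in (0:ℝ)..x, g t with hFdef
  have hF : ∀ x, HasDerivAt F (g x) x := fun x =>
    (hgc.integral_hasStrictDerivAt 0 x).hasDerivAt
  set J : ℝ → ℝ := fun x => Real.exp (F x) with hJdef
  have hJpos : ∀ x, 0 < J x := fun x => Real.exp_pos _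
  have hJd : ∀ x, HasDerivAt J (g x * J x) x := fun x => by
    simpa [hJdef, mul_comm] using (hF x).exp
  have derivJ : deriv J = fun x => g x * J x := funext fun x => (hJd x).deriv
  have hJcont : Continuous J := continuous_iff_continuousAt.2 fun x => (hJd x).continuousAt
  have hgd : ∀ x, HasDerivAt g (pp M x * (g x)^2) x := by
    intro x
    have h := (QQ_hasDeriv hmc hm1 x).inv (QQ_pos hmc hm1 x).ne'
    convert h using 1
    have := (QQ_pos hmc hm1 x).ne'
    · rfl
    · rfl
    · rfl
    · simp only [hgdef, neg_neg, inv_pow, div_eq_mul_inv]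
  have hJd2 : ∀ x, HasDerivAt (deriv J)
      (pp M x * (g x)^2 * J x + g x * (g x * J x)) x := fun x => by
    rw [derivJ]; exact (hgd x).mul (hJd x)
  have deriv2J : ∀ x, deriv (deriv J) x
      = pp M x * (g x)^2 * J x + g x * (g x * J x) := fun x => (hJd2 x).deriv
  refine ⟨J, hJpos 0, fun x _ => (hJpos x).le, ?_, ?_, ?_, ?_, ?_, ?_⟩
  · -- C¹
    refine (contDiff_one_iff_deriv.2 ⟨fun x => (hJd x).differentiableAt, ?_⟩).contDiffOn
    rw [derivJ]
    exact hgc.mul hJcont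
  · -- monotone
    apply (strictMonoOn_of_deriv_pos (convex_Ici 0) hJcont.continuousOn ?_).monotoneOn
    intro x _
    rw [derivJ]
    exact mul_pos (hgpos x) (hJpos x)
  · -- convex
    apply convexOn_of_deriv2_nonneg (convex_Ici 0) hJcont.continuousOn
      (fun x _ => (hJd x).differentiableAt.differentiableWithinAt)
      (fun x _ => (hJd2 x).differentiableAt.differentiableWithinAt)
    intro x _
    have h2 : deriv^[2] J x = deriv (deriv J) x := rfl
    rw [h2, deriv2J x]
    have h3 := pp_pos hm1 x
    have h4 := hgpos x
    have h5 := hJpos x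
    positivity
  · -- limit 1
    have heq : ∀ x, (deriv J x)^2 / (deriv (deriv J) x * J x) = (1 + pp M x)⁻¹ := by
      intro x
      have h1 := hgpos x
      have h2 := hJpos x
      have h3 := (pp_pos hm1 x)
      have hd : pp M x * g x^2 * J x + g x * (g x * J x)
          = (1 + pp M x) * (g x ^ 2 * J x) := by ring
      rw [deriv2J x, (hJd x).deriv, hd]
      rw [div_eq_iff (by positivity)]
      have h4 : (1 + pp M x) ≠ 0 := by positivity
      field_simp
    rw [tendsto_congr heq]
    have hp0 : Tendsto (pp M) atTop (nhds 0) := by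
      apply squeeze_zero (fun x => (pp_pos hm1 x).le) (fun x => pp_le hm1 x)
      have h1 : Tendsto (fun x : ℝ => -x^2) atTop atBot :=
        tendsto_neg_atTop_atBot.comp (tendsto_pow_atTop (two_ne_zero))
      exact Real.tendsto_exp_atBot.comp h1
    have := (tendsto_const_nhds (x := (1:ℝ)).add hp0).inv₀ (by norm_num)
    simpa using this
  · -- rapid variation
    intro l hl
    have key : ∀ x, (deriv J (l*x) / J (l*x)) / (deriv J x / J x) = QQ M x / QQ M (l*x) := by
      intro x
      rw [derivJ]
      simp only
      rw [mul_div_assoc, div_self (hJpos (l*x)).ne', mul_one,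
        mul_div_assoc, div_self (hJpos x).ne', mul_one, hgdef]
      exact inv_div_inv _ _
    rw [tendsto_congr key]
    have hexp : Tendsto (fun x : ℝ => Real.exp ((l*x)^2 - (x+1)^2)) atTop atTop := by
      apply Real.tendsto_exp_atTop.comp
      have hfac : (fun x : ℝ => (l*x)^2 - (x+1)^2)
          = fun x => ((l-1)*x + -1) * ((l+1)*x + 1) := by funext x; ring
      rw [hfac]
      have t1 : Tendsto (fun x : ℝ => (l-1)*x + -1) atTop atTop :=
        tendsto_atTop_add_const_right _ _ (Tendsto.const_mul_atTop (by linarith) tendsto_id)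
      have t2 : Tendsto (fun x : ℝ => (l+1)*x + 1) atTop atTop :=
        tendsto_atTop_add_const_right _ _ (Tendsto.const_mul_atTop (by linarith) tendsto_id)
      exact t1.atTop_mul_atTop₀ t2
    apply tendsto_atTop_mono' _ _ hexp
    filter_upwards [eventually_ge_atTop (1:ℝ), eventually_ge_atTop (1/(l-1))] with x hx1 hx2
    have hl1 : (0:ℝ) < l - 1 := by linarith
    have hlx : x + 1 ≤ l * x := by
      have : 1 ≤ (l-1) * x := by
        rw [div_le_iff₀ hl1] at hx2
        linarith [hx2]
      nlinarith
    have hlx1 : (1:ℝ) ≤ l * x := by linarith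
    have hx0 : (0:ℝ) ≤ x := by linarith
    have hA := QQ_lower hmc hmm hm1 hx0
    have hB := QQ_tail hmc hmm hm1 hlx1
    have hMpos1 := m_pos hm1 (x+1)
    have hMpos2 := m_pos hm1 (l*x)
    have hE : Real.exp ((l*x)^2-(x+1)^2) * Real.exp (-(l*x)^2) = Real.exp (-(x+1)^2) := by
      rw [← Real.exp_add]; ring_nf
    have hstep : Real.exp ((l*x)^2-(x+1)^2) ≤ pp M (x+1) / (Real.exp (-(l*x)^2) / M (l*x)) := by
      rw [le_div_iff₀ (by positivity)]
      calc Real.exp ((l*x)^2-(x+1)^2) * (Real.exp (-(l*x)^2) / M (l*x))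
          = Real.exp (-(x+1)^2) / M (l*x) := by rw [← mul_div_assoc, hE]
        _ ≤ Real.exp (-(x+1)^2) / M (x+1) :=
            div_le_div_of_nonneg_left (Real.exp_pos _).le hMpos1 (hmm (by linarith))
        _ = pp M (x+1) := rfl
    calc Real.exp ((l*x)^2-(x+1)^2) ≤ pp M (x+1) / (Real.exp (-(l*x)^2) / M (l*x)) := hstep
      _ ≤ QQ M x / QQ M (l*x) :=
          div_le_div₀ (QQ_pos hmc hm1 x).le hA (QQ_pos hmc hm1 (l*x)) hB
  · -- domination
    intro x hx
    have hFr : r x ≤ F x := by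
      have hftc : (∫ t in (0:ℝ)..x, deriv r t) = r x - r 0 := by
        apply intervalIntegral.integral_eq_sub_of_hasDerivAt
        · intro t ht
          rw [uIcc_of_le hx] at ht
          exact hrd t (mem_Ici.2 ht.1)
        · apply ContinuousOn.intervalIntegrable
          apply hr'cont.mono
          rw [uIcc_of_le hx]
          exact fun t ht => mem_Ici.2 ht.1
      have hmono : ∀ t ∈ Set.Icc 0 x, deriv r t ≤ g t := by
        intro t ht
        have ht0 : (0:ℝ) ≤ t := ht.1
        have h1 : QQ M t ≤ 2 / M t := QQ_le hmc hmm hm1 ht0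
        have h2 : M t / 2 ≤ g t := by
          show M t / 2 ≤ (QQ M t)⁻¹
          have hq := QQ_pos hmc hm1 t
          have h6 := inv_anti₀ hq h1
          rwa [inv_div] at h6
        have h3 : M t / 2 = 1 + deriv r (max t 0 + 1) := by
          simp only [hMdef]; ring
        have h4 : max t 0 + 1 = t + 1 := by rw [max_eq_left ht0]
        have h5 : deriv r t ≤ deriv r (t + 1) :=
          (hr'mono (mem_Ici.2 ht0) (mem_Ici.2 (by linarith)) (by linarith)).le
        rw [h3, h4] at h2
        linarith
      have hint : (∫ t in (0:ℝ)..x, deriv r t) ≤ ∫ t in (0:ℝ)..x, g t := by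
        apply intervalIntegral.integral_mono_on hx ?_ (hgc.intervalIntegrable 0 x) hmono
        apply ContinuousOn.intervalIntegrable
        apply hr'cont.mono
        rw [uIcc_of_le hx]
        exact fun t ht => mem_Ici.2 ht.1
      rw [hftc, hr0, sub_zero] at hint
      exact hint
    exact Real.exp_le_exp.2 hFr
end
end
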